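/- arXiv:1403.2653 — 8 statements merged into one kernel-verified Lean document; each statement's English description precedes it below -/
import Mathlib

section
/- Let H ⊆ ℝ² and suppose some p ∈ H is simultaneously an E_i-boundary point and an E_{i+1}-boundary point of H, for some index i. Let ν ∈ ℝ² be any nonzero vector with ⟨v_{i+1} − v_i, ν⟩ = 0 and ⟨v_{i−1} − v_i, ν⟩ < 0. Then H is contained in the closed halfplane {x ∈ ℝ² : ⟨x − p, ν⟩ ≥ 0}, which is bounded by the line through p parallel to the segment v_i v_{i+1}. -/
noncomputable section

/-- The planar cross product of two vectors in `ℝ × ℝ`. -/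
def cross (a b : ℝ × ℝ) : ℝ := a.1 * b.2 - a.2 * b.1

/-- The vertices `v 1, …, v m` (indexed cyclically) are in strictly convex position,
listed in clockwise order: for every directed edge `v i → v (i+1)`, all other
vertices lie strictly on its right side. -/
def ClockwiseConvex {m : ℕ} (v : ZMod m → ℝ × ℝ) : Prop :=
  ∀ i j : ZMod m, j ≠ i → j ≠ i + 1 → cross (v (i + 1) - v i) (v j - v i) < 0

/-- Central symmetry: there is a center `c` with `v (i + n) = 2 c - v i` for all `i`. -/
def CentSym (n : ℕ) (v : ZMod (2 * n) → ℝ × ℝ) : Prop :=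
  ∃ c : ℝ × ℝ, ∀ i : ZMod (2 * n), v (i + (n : ZMod (2 * n))) = (2 : ℝ) • c - v i

/-- The translate `E_i(p)` of the closed wedge
`E_i = {s • (v (i-1) - v i) + t • (v (i+1) - v i) : s, t ≥ 0}` with apex at `p`. -/
def Wedge {m : ℕ} (v : ZMod m → ℝ × ℝ) (i : ZMod m) (p : ℝ × ℝ) : Set (ℝ × ℝ) :=
  {x | ∃ s t : ℝ, 0 ≤ s ∧ 0 ≤ t ∧ x = p + s • (v (i - 1) - v i) + t • (v (i + 1) - v i)}

/-- Euclidean dot product on `ℝ²`. -/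
def dot (a b : ℝ × ℝ) : ℝ := a.1 * b.1 + a.2 * b.2


/-- `p` is an `E_i`-boundary point of `H`: `p ∈ H` and `E_i(p) ∩ H = {p}`. -/
def IsBd {m : ℕ} (v : ZMod m → ℝ × ℝ) (H : Set (ℝ × ℝ)) (i : ZMod m) (p : ℝ × ℝ) : Prop :=
  p ∈ H ∧ Wedge v i p ∩ H = {p}

/-- Key algebraic lemma: for centrally symmetric convex position data, consecutive
"second-neighbor" edge directions turn clockwise. -/
lemma key_lemma (A B C D c : ℝ × ℝ)
    (h1 : cross (B - A) (C - A) < 0)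
    (h2 : cross (B - A) ((2:ℝ) • c - C - A) < 0)
    (h3 : cross (D - C) (B - C) < 0)
    (h4 : cross (D - C) ((2:ℝ) • c - B - C) < 0)
    (h5 : cross (C - B) ((2:ℝ) • c - B - B) < 0) :
    cross (B - A) (D - C) < 0 := by
  set ab := cross (A - c) (B - c) with hab
  set ac := cross (A - c) (C - c) with hac
  set ad := cross (A - c) (D - c) with had
  set bc := cross (B - c) (C - c) with hbc
  set bd := cross (B - c) (D - c) with hbd
  set cd := cross (C - c) (D - c) with hcd
  have e1 : ab + bc - ac < 0 := by
    have : cross (B - A) (C - A) = ab + bc - ac := by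
      simp only [hab, hbc, hac, cross, Prod.fst_sub, Prod.snd_sub]; ring
    linarith [h1, this.ge, this.le]
  have e2 : ab + ac - bc < 0 := by
    have : cross (B - A) ((2:ℝ) • c - C - A) = ab + ac - bc := by
      simp only [hab, hbc, hac, cross, Prod.fst_sub, Prod.snd_sub, Prod.smul_fst,
        Prod.smul_snd, smul_eq_mul]; ring
    linarith [h2, this.le]
  have e3 : cd + bc - bd < 0 := by
    have : cross (D - C) (B - C) = cd + bc - bd := by
      simp only [hcd, hbc, hbd, cross, Prod.fst_sub, Prod.snd_sub]; ring
    linarith [h3, this.le]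
  have e4 : cd + bd - bc < 0 := by
    have : cross (D - C) ((2:ℝ) • c - B - C) = cd + bd - bc := by
      simp only [hcd, hbc, hbd, cross, Prod.fst_sub, Prod.snd_sub, Prod.smul_fst,
        Prod.smul_snd, smul_eq_mul]; ring
    linarith [h4, this.le]
  have e5 : bc < 0 := by
    have : cross (C - B) ((2:ℝ) • c - B - B) = 2 * bc := by
      simp only [hbc, cross, Prod.fst_sub, Prod.snd_sub, Prod.smul_fst,
        Prod.smul_snd, smul_eq_mul]; ring
    linarith [h5, this.le]
  have ep : ab * cd - ac * bd + ad * bc = 0 := by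
    simp only [hab, hac, had, hbc, hbd, hcd, cross, Prod.fst_sub, Prod.snd_sub]; ring
  have idT : cross (B - A) (D - C) = bd - bc - ad + ac := by
    simp only [hab, hac, had, hbc, hbd, hcd, cross, Prod.fst_sub, Prod.snd_sub]; ring
  rw [idT]
  -- With α = -ab, γ = -cd, q = -ac, r = -bd, m = -ad, k = -bc:
  -- α > |q-k|, γ > |r-k|, k>0, αγ = qr - mk  ⟹  q+r > m+k.
  have p1 : 0 < ac - ab - bc := by linarith
  have p2 : 0 < bc - ab - ac := by linarith
  have p3 : 0 < bd - cd - bc := by linarith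
  have p4 : 0 < bc - cd - bd := by linarith
  nlinarith [mul_pos p1 p4, mul_pos p2 p3, e5, ep, mul_pos p1 p3, mul_pos p2 p4]

/-- Claim 5 of the paper. If `p ∈ H` is simultaneously an `E_i`- and an
`E_{i+1}`-boundary point of `H`, then `H` lies in the closed halfplane
`{x : ⟨x - p, ν⟩ ≥ 0}` bounded by the line through `p` parallel to `v i v (i+1)`,
where `ν ≠ 0`, `⟨v (i+1) - v i, ν⟩ = 0` and `⟨v (i-1) - v i, ν⟩ < 0`. -/
theorem halfplane_of_double_boundary
    (n : ℕ) (hn : 2 ≤ n) (v : ZMod (2 * n) → ℝ × ℝ)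
    (hcw : ClockwiseConvex v) (hsym : CentSym n v)
    (H : Set (ℝ × ℝ)) (i : ZMod (2 * n)) (p : ℝ × ℝ)
    (hbd : IsBd v H i p) (hbd' : IsBd v H (i + 1) p)
    (ν : ℝ × ℝ) (hν : ν ≠ 0)
    (hperp : dot (v (i + 1) - v i) ν = 0)
    (hneg : dot (v (i - 1) - v i) ν < 0) :
    H ⊆ {x : ℝ × ℝ | 0 ≤ dot (x - p) ν} := by
  obtain ⟨c, hc⟩ := hsym
  have hne : ∀ k : ℕ, 0 < k → k < 2 * n → ((k : ZMod (2 * n))) ≠ 0 := by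
    intro k hk1 hk2 h
    rw [ZMod.natCast_eq_zero_iff] at h
    exact absurd (Nat.le_of_dvd hk1 h) (by omega)
  set e := v (i + 1) - v i with hedef
  set a := v (i - 1) - v i with hadef
  set b := v (i + 2) - v (i + 1) with hbdef
  -- basic convexity facts
  have hea : cross e a < 0 := by
    have h1 : (i - 1 : ZMod (2*n)) ≠ i := by
      intro h; exact hne 1 one_pos (by omega) (by push_cast; linear_combination -h)
    have h2 : (i - 1 : ZMod (2*n)) ≠ i + 1 := by
      intro h; exact hne 2 two_pos (by omega) (by push_cast; linear_combination -h)
    exact hcw i (i - 1) h1 h2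
  have heb2 : cross e (v (i + 2) - v i) < 0 := by
    have h1 : (i + 2 : ZMod (2*n)) ≠ i := by
      intro h; exact hne 2 two_pos (by omega) (by push_cast; linear_combination h)
    have h2 : (i + 2 : ZMod (2*n)) ≠ i + 1 := by
      intro h; exact hne 1 one_pos (by omega) (by push_cast; linear_combination h)
    exact hcw i (i + 2) h1 h2
  have heb : cross e b < 0 := by
    have hsplit : v (i + 2) - v i = b + e := by rw [hbdef, hedef]; abel
    have hcr : cross e (b + e) = cross e b := by simp only [cross, Prod.fst_add, Prod.snd_add]; ring
    rw [hsplit, hcr] at heb2; exact heb2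
  -- key fact: cross a b ≥ 0
  have hkey : 0 ≤ cross a b := by
    rcases eq_or_lt_of_le hn with hn2 | hn3
    · -- n = 2 : a = b
      subst hn2
      have hn2' : ((2:ℕ) : ZMod (2*2)) = 2 := by decide
      have hv2 : v (i + 2) = (2:ℝ) • c - v i := by
        have := hc i; rwa [hn2'] at this
      have hv3 : v (i - 1) = (2:ℝ) • c - v (i + 1) := by
        have := hc (i + 1); rw [hn2'] at this
        have hidx : i + 1 + 2 = i - 1 := by
          have h4 : (4 : ZMod (2*2)) = 0 := by decide
          linear_combination h4
        rwa [hidx] at this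
      have hab : a = b := by
        rw [hadef, hbdef, hv3, hv2]; abel
      rw [hab]
      have : cross b b = 0 := by simp only [cross]; ring
      linarith [this.le, this.ge]
    · -- n ≥ 3
      have hn3' : 3 ≤ n := hn3
      have hBA : v i - v (i - 1) = -a := by rw [hadef]; abel
      -- apply key_lemma with A = v (i-1), B = v i, C = v (i+1), D = v (i+2)
      have h1 : cross (v i - v (i - 1)) (v (i + 1) - v (i - 1)) < 0 := by
        have e1 : (i + 1 : ZMod (2*n)) ≠ i - 1 := by
          intro h; exact hne 2 two_pos (by omega) (by push_cast; linear_combination h)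
        have e2 : (i + 1 : ZMod (2*n)) ≠ (i - 1) + 1 := by
          intro h; exact hne 1 one_pos (by omega) (by push_cast; linear_combination h)
        have := hcw (i - 1) (i + 1) e1 e2
        have hidx : (i - 1) + 1 = i := by ring
        rwa [hidx] at this
      have h2 : cross (v i - v (i - 1)) ((2:ℝ) • c - v (i + 1) - v (i - 1)) < 0 := by
        have e1 : (i + 1 + (n : ZMod (2*n)) : ZMod (2*n)) ≠ i - 1 := by
          intro h
          exact hne (n + 2) (by omega) (by omega) (by push_cast; linear_combination h)
        have e2 : (i + 1 + (n : ZMod (2*n)) : ZMod (2*n)) ≠ (i - 1) + 1 := by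
          intro h
          exact hne (n + 1) (by omega) (by omega) (by push_cast; linear_combination h)
        have := hcw (i - 1) (i + 1 + (n : ZMod (2*n))) e1 e2
        have hidx : (i - 1) + 1 = i := by ring
        rw [hidx, hc (i + 1)] at this
        exact this
      have h3 : cross (v (i + 2) - v (i + 1)) (v i - v (i + 1)) < 0 := by
        have e1 : (i : ZMod (2*n)) ≠ i + 1 := by
          intro h; exact hne 1 one_pos (by omega) (by push_cast; linear_combination -h)
        have e2 : (i : ZMod (2*n)) ≠ (i + 1) + 1 := by
          intro h; exact hne 2 two_pos (by omega) (by push_cast; linear_combination -h)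
        have := hcw (i + 1) i e1 e2
        have hidx : (i + 1) + 1 = i + 2 := by ring
        rwa [hidx] at this
      have h4 : cross (v (i + 2) - v (i + 1)) ((2:ℝ) • c - v i - v (i + 1)) < 0 := by
        have e1 : (i + (n : ZMod (2*n)) : ZMod (2*n)) ≠ i + 1 := by
          intro h
          exact hne (n - 1) (by omega) (by omega)
            (by push_cast [Nat.cast_sub (by omega : 1 ≤ n)]; linear_combination h)
        have e2 : (i + (n : ZMod (2*n)) : ZMod (2*n)) ≠ (i + 1) + 1 := by
          intro h
          exact hne (n - 2) (by omega) (by omega)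
            (by push_cast [Nat.cast_sub (by omega : 2 ≤ n)]; linear_combination h)
        have := hcw (i + 1) (i + (n : ZMod (2*n))) e1 e2
        have hidx : (i + 1) + 1 = i + 2 := by ring
        rw [hidx, hc i] at this
        exact this
      have h5 : cross (v (i + 1) - v i) ((2:ℝ) • c - v i - v i) < 0 := by
        have e1 : (i + (n : ZMod (2*n)) : ZMod (2*n)) ≠ i := by
          intro h; exact hne n (by omega) (by omega) (by push_cast; linear_combination h)
        have e2 : (i + (n : ZMod (2*n)) : ZMod (2*n)) ≠ i + 1 := by
          intro h
          exact hne (n - 1) (by omega) (by omega)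
            (by push_cast [Nat.cast_sub (by omega : 1 ≤ n)]; linear_combination h)
        have := hcw i (i + (n : ZMod (2*n))) e1 e2
        rw [hc i] at this
        exact this
      have := key_lemma (v (i - 1)) (v i) (v (i + 1)) (v (i + 2)) c h1 h2 h3 h4 h5
      -- this : cross (v i - v (i-1)) (v (i+2) - v (i+1)) < 0, i.e. cross (-a) b < 0
      rw [hBA] at this
      have hneg' : cross (-a) b = - cross a b := by
        simp only [cross, Prod.fst_neg, Prod.snd_neg]; ring
      rw [hneg'] at this
      linarith
  -- e ≠ 0
  have he0 : e ≠ 0 := by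
    intro h
    rw [h] at hea
    simp only [cross, Prod.fst_zero, Prod.snd_zero, zero_mul, sub_zero] at hea
    linarith [hea]
  -- decompose ν = μ • (-e.2, e.1)
  have hp : e.1 * ν.1 + e.2 * ν.2 = 0 := by
    have := hperp; simp only [dot] at this; exact this
  obtain ⟨μ, hμ1, hμ2⟩ : ∃ μ : ℝ, ν.1 = -(μ * e.2) ∧ ν.2 = μ * e.1 := by
    by_cases h1 : e.1 = 0
    · have h2 : e.2 ≠ 0 := by
        intro h2; exact he0 (Prod.ext h1 h2)
      have hν2 : ν.2 = 0 := by
        have h := hp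
        rw [h1] at h
        simp only [zero_mul, zero_add] at h
        exact (mul_eq_zero.mp h).resolve_left h2
      refine ⟨-ν.1 / e.2, by field_simp, by rw [hν2, h1]; ring⟩
    · refine ⟨ν.2 / e.1, ?_, by field_simp⟩
      field_simp
      linear_combination hp
  have hdotcross : ∀ z : ℝ × ℝ, dot z ν = μ * cross e z := by
    intro z
    simp only [dot, cross, hμ1, hμ2]; ring
  have hμpos : 0 < μ := by
    have h1 : μ * cross e a < 0 := by rw [← hdotcross a]; exact hneg
    nlinarith [h1, hea]
  intro x hx
  simp only [Set.mem_setOf_eq]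
  rw [hdotcross (x - p)]
  suffices hcr : 0 ≤ cross e (x - p) by exact mul_nonneg hμpos.le hcr
  by_contra hlt
  push_neg at hlt
  set w := x - p with hwdef
  have hxw : x = p + w := by rw [hwdef]; abel
  have hwne : cross e w ≠ 0 := ne_of_lt hlt
  have hwp : w ≠ 0 := by
    intro h; rw [h] at hwne
    exact hwne (by simp only [cross, Prod.fst_zero, Prod.snd_zero]; ring)
  rcases le_or_gt (cross w a) 0 with hwa | hwa
  · -- x lies in Wedge v i p
    have hx_mem : x ∈ Wedge v i p ∩ H := by
      refine ⟨⟨cross e w / cross e a, cross w a / cross e a, ?_, ?_, ?_⟩, hx⟩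
      · exact le_of_lt (div_pos_of_neg_of_neg hlt hea)
      · rw [div_nonneg_iff]; right; exact ⟨hwa, hea.le⟩
      · have hne0 : cross e a ≠ 0 := ne_of_lt hea
        have hwsum : w = (cross e w / cross e a) • a + (cross w a / cross e a) • e := by
          apply Prod.ext
          · simp only [Prod.fst_add, Prod.smul_fst, smul_eq_mul]
            field_simp
            simp only [cross]; ring
          · simp only [Prod.snd_add, Prod.smul_snd, smul_eq_mul]
            field_simp
            simp only [cross]; ring
        rw [← hadef, ← hedef, hxw, add_assoc]
        exact congrArg (fun z => p + z) hwsum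
    rw [hbd.2] at hx_mem
    have : x = p := hx_mem
    rw [this] at hwdef
    exact hwp (by rw [hwdef]; abel)
  · -- x lies in Wedge v (i+1) p
    have hwb : 0 < cross w b := by
      have hid : cross e a * cross w b =
          cross w a * cross e b + cross e w * cross a b := by
        simp only [cross]; ring
      nlinarith [hid, hea, hwa, heb, hlt, hkey]
    have hx_mem : x ∈ Wedge v (i + 1) p ∩ H := by
      refine ⟨⟨cross w b / (- cross e b), (- cross e w) / (- cross e b), ?_, ?_, ?_⟩, hx⟩
      · exact le_of_lt (div_pos hwb (by linarith))
      · exact le_of_lt (div_pos (by linarith) (by linarith))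
      · have hidx1 : (i + 1) - 1 = i := by ring
        have hidx2 : (i + 1) + 1 = i + 2 := by ring
        have hne0 : cross e b ≠ 0 := ne_of_lt heb
        have hme : v i - v (i + 1) = -e := by rw [hedef]; abel
        have hwsum : w = (cross w b / (- cross e b)) • (-e) + ((- cross e w) / (- cross e b)) • b := by
          apply Prod.ext
          · simp only [Prod.fst_add, Prod.smul_fst, smul_eq_mul, Prod.fst_neg]
            field_simp
            simp only [cross]; ring
          · simp only [Prod.snd_add, Prod.smul_snd, smul_eq_mul, Prod.snd_neg]
            field_simp
            simp only [cross]; ring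
        rw [hidx1, hidx2, hme, ← hbdef, hxw, add_assoc]
        exact congrArg (fun z => p + z) hwsum
    rw [hbd'.2] at hx_mem
    have : x = p := hx_mem
    rw [this] at hwdef
    exact hwp (by rw [hwdef]; abel)
end
end

section
/- For every set H ⊆ ℝ² and every index i, there is at most one point of H that is simultaneously an E_i-boundary point and an E_{i+1}-boundary point of H; that is, if p and q are both E_i-boundary points and E_{i+1}-boundary points of H, then p = q. -/
/-!
Write `a`, `b`, `e` for the edges `v i - v (i-1)`, `v (i+1) - v i`, `v (i+2) - v (i+1)` and
`d = q - p`. If `p ≠ q` are both `E_i`-boundary points, neither `d` nor `-d` lies in the wedge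
`E_i`, which forces `cross a d` and `cross b d` to have strictly opposite signs; likewise for
`cross b d` and `cross e d`. So `cross a d` and `cross e d` share a sign opposite to that of
`cross b d`. This contradicts the Plücker relation
`cross a b * cross e d - cross a e * cross b d + cross a d * cross b e = 0`, because
`cross a b < 0` and `cross b e < 0` (clockwise convexity) and `cross a e ≤ 0`: by central symmetry
the edges turn by at most a half turn from `a` to `e`.
-/

noncomputable section

lemma cross_self_eq_zero (a : ℝ × ℝ) : cross a a = 0 := by
  simp only [cross]; ring

lemma cross_neg_left (a b : ℝ × ℝ) : cross (-a) b = -cross a b := by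
  simp only [cross, Prod.fst_neg, Prod.snd_neg]; ring

lemma cross_neg_right (a b : ℝ × ℝ) : cross a (-b) = -cross a b := by
  simp only [cross, Prod.fst_neg, Prod.snd_neg]; ring

lemma cross_add_right (a b c : ℝ × ℝ) : cross a (b + c) = cross a b + cross a c := by
  simp only [cross, Prod.fst_add, Prod.snd_add]; ring

lemma cross_swap (a b : ℝ × ℝ) : cross b a = -cross a b := by
  simp only [cross]; ring

lemma cross_plucker (a b e d : ℝ × ℝ) :
    cross a b * cross e d - cross a e * cross b d + cross a d * cross b e = 0 := by
  simp only [cross]; ring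

lemma exists_nonneg_smul_add_smul_of_cross_nonneg {A B d : ℝ × ℝ} (hAB : 0 < cross A B)
    (hA : 0 ≤ cross A d) (hB : 0 ≤ cross d B) :
    ∃ s t : ℝ, 0 ≤ s ∧ 0 ≤ t ∧ d = s • A + t • B := by
  refine ⟨cross d B / cross A B, cross A d / cross A B,
    div_nonneg hB hAB.le, div_nonneg hA hAB.le, ?_⟩
  ext <;> simp only [Prod.fst_add, Prod.snd_add, Prod.smul_fst, Prod.smul_snd, smul_eq_mul] <;>
    rw [div_mul_eq_mul_div, div_mul_eq_mul_div, ← add_div, eq_div_iff hAB.ne'] <;>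
    simp only [cross] <;> ring

lemma cross_mul_cross_nonneg {a b e d : ℝ × ℝ} (hab : cross a b < 0) (hbe : cross b e < 0)
    (hae : cross a e ≤ 0) (had : cross a d * cross b d < 0) :
    0 ≤ cross b d * cross e d := by
  by_contra! hed
  have key : cross a b * (cross b d * cross e d) - cross a e * cross b d ^ 2
      + cross a d * cross b d * cross b e = 0 := by
    linear_combination cross b d * cross_plucker a b e d
  nlinarith [mul_pos_of_neg_of_neg hab hed, mul_pos_of_neg_of_neg had hbe,
    mul_nonneg (neg_nonneg.2 hae) (sq_nonneg (cross b d))]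

lemma cross_sub_nonpos_of_reflected {P₀ P₁ P₂ P₃ c : ℝ × ℝ}
    (hab : cross (P₁ - P₀) (P₂ - P₁) < 0) (hbe : cross (P₂ - P₁) (P₃ - P₂) < 0)
    (h₀ : cross (P₁ - P₀) ((2 : ℝ) • c - P₂ - P₀) < 0)
    (h₁ : cross (P₂ - P₁) ((2 : ℝ) • c - P₁ - P₁) < 0)
    (h₂ : cross (P₃ - P₂) ((2 : ℝ) • c - P₁ - P₂) < 0) :
    cross (P₁ - P₀) (P₃ - P₂) ≤ 0 := by
  set a := P₁ - P₀
  set b := P₂ - P₁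
  set e := P₃ - P₂
  set u := (2 : ℝ) • c - P₀ - P₁
  have ha : cross a ((2 : ℝ) • c - P₂ - P₀) = cross a u - cross a b := by
    simp only [a, b, u, cross, Prod.fst_sub, Prod.snd_sub]; ring
  have hb : cross b ((2 : ℝ) • c - P₁ - P₁) = cross b u + cross a b := by
    simp only [a, b, u, cross, Prod.fst_sub, Prod.snd_sub]; ring
  have he : cross e ((2 : ℝ) • c - P₁ - P₂) = cross e u + cross a e + cross b e := by
    simp only [a, b, e, u, cross, Prod.fst_sub, Prod.snd_sub]; ring
  by_contra! hae
  nlinarith [cross_plucker a b e u, mul_pos_of_neg_of_neg hab (show cross e u + cross a e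
    + cross b e < 0 by linarith), mul_pos hae (show 0 < -cross a b - cross b u by linarith),
    mul_pos_of_neg_of_neg hbe (show cross a u - cross a b < 0 by linarith)]

section Polygon

variable {m : ℕ} {v : ZMod m → ℝ × ℝ}

lemma ClockwiseConvex.cross_vertex_neg (hv : ClockwiseConvex v) {i j : ZMod m} {k : ℕ}
    (hj : j = i + k) (hk : 2 ≤ k) (hkm : k < m) :
    cross (v (i + 1) - v i) (v j - v i) < 0 := by
  have cast_ne (l : ℕ) (hl : l < k) : i + k ≠ i + l := fun h ↦ by
    have h' := (ZMod.natCast_eq_natCast_iff' k l m).1 (add_left_cancel h)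
    rw [Nat.mod_eq_of_lt hkm, Nat.mod_eq_of_lt (hl.trans hkm)] at h'
    omega
  subst hj
  exact hv i _ (by simpa using cast_ne 0 (by omega)) (by simpa using cast_ne 1 (by omega))

lemma ClockwiseConvex.cross_edge_succ_neg (hv : ClockwiseConvex v) (hm : 3 ≤ m) (i : ZMod m) :
    cross (v (i + 1) - v i) (v (i + 2) - v (i + 1)) < 0 := by
  have h := hv.cross_vertex_neg (i := i) (k := 2) (j := i + 2) (by norm_num) le_rfl (by omega)
  rwa [← sub_add_sub_cancel (v (i + 2)) (v (i + 1)), cross_add_right, cross_self_eq_zero,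
    add_zero] at h

lemma ClockwiseConvex.cross_edge_add_two_nonpos {n : ℕ} {v : ZMod (2 * n) → ℝ × ℝ}
    (hv : ClockwiseConvex v) (hs : CentSym n v) (hn : 2 ≤ n) (i : ZMod (2 * n)) :
    cross (v (i + 1) - v i) (v (i + 3) - v (i + 2)) ≤ 0 := by
  obtain ⟨c, hc⟩ := hs
  rcases hn.eq_or_lt with rfl | hn
  · have h₂ : v (i + 2) = (2 : ℝ) • c - v i := by simpa using hc i
    have h₃ := hc (i + 1)
    rw [show i + 1 + ((2 : ℕ) : ZMod (2 * 2)) = i + 3 by push_cast; ring] at h₃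
    rw [h₂, h₃, sub_sub_sub_cancel_left, ← neg_sub, cross_neg_left, cross_self_eq_zero,
      neg_zero]
  · have h₀ := hv.cross_vertex_neg (i := i) (k := n + 2) (j := i + 2 + n) (by push_cast; ring)
      (by omega) (by omega)
    have h₁ := hv.cross_vertex_neg (i := i + 1) (k := n) (j := i + 1 + n) rfl (by omega)
      (by omega)
    have h₂ := hv.cross_vertex_neg (i := i + 2) (k := n - 1) (j := i + 1 + n)
      (by push_cast [Nat.cast_sub (by omega : 1 ≤ n)]; ring) (by omega) (by omega)
    have hbe := hv.cross_edge_succ_neg (by omega) (i + 1)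
    rw [hc] at h₀ h₁ h₂
    rw [show i + 1 + 1 = i + 2 by ring] at h₁ hbe
    rw [show i + 2 + 1 = i + 3 by ring] at h₂
    rw [show i + 1 + 2 = i + 3 by ring] at hbe
    exact cross_sub_nonpos_of_reflected (hv.cross_edge_succ_neg (by omega) i) hbe h₀ h₁ h₂

end Polygon

section Boundary

variable {m : ℕ} {v : ZMod m → ℝ × ℝ} {H : Set (ℝ × ℝ)} {i : ZMod m}
  {p q : ℝ × ℝ}

lemma IsBd.not_cross_nonpos (hp : IsBd v H i p) (hq : q ∈ H) (hqp : q ≠ p)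
    (hturn : cross (v i - v (i - 1)) (v (i + 1) - v i) < 0) :
    ¬(cross (v i - v (i - 1)) (q - p) ≤ 0 ∧ cross (v (i + 1) - v i) (q - p) ≤ 0) := by
  rintro ⟨ha, hb⟩
  obtain ⟨s, t, hs, ht, hd⟩ := exists_nonneg_smul_add_smul_of_cross_nonneg
    (A := v (i - 1) - v i) (B := v (i + 1) - v i) (d := q - p)
    (by rw [← neg_sub, cross_neg_left]; linarith)
    (by rw [← neg_sub, cross_neg_left]; linarith)
    (by rw [cross_swap]; linarith)
  have hmem : q ∈ Wedge v i p := ⟨s, t, hs, ht, by rw [add_assoc, ← hd]; abel⟩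
  exact hqp (hp.2.subset ⟨hmem, hq⟩)

lemma IsBd.cross_mul_cross_neg (hp : IsBd v H i p) (hq : IsBd v H i q) (hpq : p ≠ q)
    (hturn : cross (v i - v (i - 1)) (v (i + 1) - v i) < 0) :
    cross (v i - v (i - 1)) (q - p) * cross (v (i + 1) - v i) (q - p) < 0 := by
  have hpos := hq.not_cross_nonpos hp.1 hpq hturn
  rw [← neg_sub q p, cross_neg_right, cross_neg_right, neg_nonpos, neg_nonpos] at hpos
  have hneg := hp.not_cross_nonpos hq.1 hpq.symm hturn
  rcases le_or_gt (cross (v i - v (i - 1)) (q - p)) 0 with ha | ha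
  · have hb := not_le.1 fun hb ↦ hneg ⟨ha, hb⟩
    exact mul_neg_of_neg_of_pos (ha.lt_of_ne fun h ↦ hpos ⟨h.ge, hb.le⟩) hb
  · exact mul_neg_of_pos_of_neg ha (not_le.1 fun hb ↦ hpos ⟨ha.le, hb⟩)

end Boundary

/-- For any `H ⊆ ℝ²` there is at most one point that is simultaneously an
`E_i`-boundary point and an `E_{i+1}`-boundary point of `H`. -/
theorem double_boundary_unique
    (n : ℕ) (hn : 2 ≤ n) (v : ZMod (2 * n) → ℝ × ℝ)
    (hcw : ClockwiseConvex v) (hsym : CentSym n v)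
    (H : Set (ℝ × ℝ)) (i : ZMod (2 * n)) (p q : ℝ × ℝ)
    (hp : IsBd v H i p) (hp' : IsBd v H (i + 1) p)
    (hq : IsBd v H i q) (hq' : IsBd v H (i + 1) q) :
    p = q := by
  by_contra hpq
  have hm : 3 ≤ 2 * n := by omega
  have hab : cross (v i - v (i - 1)) (v (i + 1) - v i) < 0 := by
    simpa [show i - 1 + 2 = i + 1 by ring] using hcw.cross_edge_succ_neg hm (i - 1)
  have hbe := hcw.cross_edge_succ_neg hm i
  have hae : cross (v i - v (i - 1)) (v (i + 2) - v (i + 1)) ≤ 0 := by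
    simpa [show i - 1 + 2 = i + 1 by ring, show i - 1 + 3 = i + 2 by ring]
      using hcw.cross_edge_add_two_nonpos hsym hn (i - 1)
  have hbd := hp'.cross_mul_cross_neg hq' hpq
    (by rwa [add_sub_cancel_right, add_assoc, one_add_one_eq_two])
  rw [add_sub_cancel_right, add_assoc, one_add_one_eq_two] at hbd
  exact (cross_mul_cross_nonneg hab hbe hae (hp.cross_mul_cross_neg hq hpq hab)).not_gt hbd
end
end

section
/- Suppose p ∈ H is a singular boundary point of H that is both an E_i-boundary point and an E_{i+n}-boundary point of H, and q ∈ H is a singular boundary point of H that is both an E_j-boundary point and an E_{j+n}-boundary point of H. Then {j mod 2n, (j+n) mod 2n} = {i mod 2n, (i+n) mod 2n}; that is, all singular boundary points of H are boundary points with respect to the same opposite pair of wedges. -/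
noncomputable section

/-- `p` is a singular boundary point of `H`. -/
def IsSingular (n : ℕ) (v : ZMod (2 * n) → ℝ × ℝ) (H : Set (ℝ × ℝ)) (p : ℝ × ℝ) : Prop :=
  ∃ i₁ n₁ i₂ n₂ : ℕ,
    ((1 ≤ i₁ ∧ i₁ < n₁ ∧ n₁ < i₂ ∧ i₂ < n₂ ∧ n₂ ≤ 2 * n) ∨
     (1 ≤ n₁ ∧ n₁ < i₁ ∧ i₁ < n₂ ∧ n₂ < i₂ ∧ i₂ ≤ 2 * n)) ∧
    IsBd v H (i₁ : ZMod (2 * n)) p ∧ IsBd v H (i₂ : ZMod (2 * n)) p ∧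
    ¬ IsBd v H (n₁ : ZMod (2 * n)) p ∧ ¬ IsBd v H (n₂ : ZMod (2 * n)) p

/-- strict local max of the functional `x ↦ cross x d` at vertex `k` -/
def LMax {m : ℕ} (v : ZMod m → ℝ × ℝ) (d : ℝ × ℝ) (k : ZMod m) : Prop :=
  0 < cross (v k - v (k - 1)) d ∧ cross (v (k + 1) - v k) d < 0

lemma cross_key (e0 e1 w d : ℝ × ℝ) (X : cross e0 w < 0) (Y : cross e1 w < 0)
    (P : 0 < cross e0 d) (Q : cross e1 d < 0) (C : cross e0 e1 < 0) :
    cross w d < 0 := by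
  have hid : cross w d * cross e0 e1 = cross e0 w * cross e1 d - cross e1 w * cross e0 d := by
    simp only [cross, Prod.fst_sub, Prod.snd_sub]; ring
  nlinarith [mul_pos_of_neg_of_neg X Q, mul_pos (neg_pos.mpr Y) P]

lemma inCone_of (a b u : ℝ × ℝ) (hab : 0 < cross a b) (h1 : 0 ≤ cross a u) (h2 : 0 ≤ cross u b) :
    ∃ s t : ℝ, 0 ≤ s ∧ 0 ≤ t ∧ u = s • a + t • b := by
  have hne : cross a b ≠ 0 := ne_of_gt hab
  refine ⟨cross u b / cross a b, cross a u / cross a b,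
    div_nonneg h2 hab.le, div_nonneg h1 hab.le, ?_⟩
  have e1 : u.1 * cross a b = cross u b * a.1 + cross a u * b.1 := by
    simp only [cross]; ring
  have e2 : u.2 * cross a b = cross u b * a.2 + cross a u * b.2 := by
    simp only [cross]; ring
  refine Prod.ext ?_ ?_ <;>
    simp only [Prod.fst_add, Prod.snd_add, Prod.smul_fst, Prod.smul_snd, smul_eq_mul] <;>
    field_simp <;> linarith

lemma lmax_unique {m : ℕ} (v : ZMod m → ℝ × ℝ) (hcw : ClockwiseConvex v)
    (h1 : (1 : ZMod m) ≠ 0) (h2 : (2 : ZMod m) ≠ 0)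
    (d : ℝ × ℝ) (i j : ZMod m) (hi : LMax v d i) (hj : LMax v d j) : i = j := by
  by_contra hne
  have hij1 : i ≠ j + 1 := by
    rintro rfl
    have h' : j + 1 - 1 = j := by ring
    rw [LMax, h'] at hi
    linarith [hi.1, hj.2]
  have hij2 : i ≠ j - 1 := by
    rintro rfl
    have h' : j - 1 + 1 = j := by ring
    rw [LMax, h'] at hi
    linarith [hi.2, hj.1]
  have hji1 : j ≠ i + 1 := fun h => hij2 (by rw [h]; ring)
  have hji2 : j ≠ i - 1 := fun h => hij1 (by rw [h]; ring)
  have main : ∀ a b : ZMod m, LMax v d b → a ≠ b → a ≠ b + 1 → a ≠ b - 1 →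
      cross (v a - v b) d < 0 := by
    intro a b hb hab hab1 hab2
    have hY : cross (v (b + 1) - v b) (v a - v b) < 0 := hcw b a hab hab1
    have hX : cross (v b - v (b - 1)) (v a - v b) < 0 := by
      have h := hcw (b - 1) a hab2 (by rwa [sub_add_cancel])
      rw [sub_add_cancel] at h
      have e : cross (v b - v (b - 1)) (v a - v (b - 1))
          = cross (v b - v (b - 1)) (v a - v b) := by
        simp only [cross, Prod.fst_sub, Prod.snd_sub]; ring
      rwa [e] at h
    have hb1b : b - 1 ≠ b := by
      intro h; apply h1
      calc (1 : ZMod m) = b - (b - 1) := by ring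
        _ = b - b := by rw [h]
        _ = 0 := sub_self b
    have hb1b1 : b - 1 ≠ b + 1 := by
      intro h; apply h2
      calc (2 : ZMod m) = (b + 1) - (b - 1) := by ring
        _ = (b + 1) - (b + 1) := by rw [h]
        _ = 0 := sub_self _
    have hC : cross (v b - v (b - 1)) (v (b + 1) - v b) < 0 := by
      have h := hcw b (b - 1) hb1b hb1b1
      have e : cross (v b - v (b - 1)) (v (b + 1) - v b)
          = cross (v (b + 1) - v b) (v (b - 1) - v b) := by
        simp only [cross, Prod.fst_sub, Prod.snd_sub]; ring
      rwa [e]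
    exact cross_key _ _ _ _ hX hY hb.1 hb.2 hC
  have k1 := main i j hj hne hij1 hij2
  have k2 := main j i hi (Ne.symm hne) hji1 hji2
  have e : cross (v j - v i) d = -cross (v i - v j) d := by
    simp only [cross, Prod.fst_sub, Prod.snd_sub]; ring
  rw [e] at k2
  linarith

lemma mem_wedge_iff {m : ℕ} (v : ZMod m → ℝ × ℝ) (k : ZMod m) (p x : ℝ × ℝ) :
    x ∈ Wedge v k p ↔
      ∃ s t : ℝ, 0 ≤ s ∧ 0 ≤ t ∧ x - p = s • (v (k - 1) - v k) + t • (v (k + 1) - v k) := by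
  constructor
  · rintro ⟨s, t, hs, ht, rfl⟩
    exact ⟨s, t, hs, ht, by abel⟩
  · rintro ⟨s, t, hs, ht, h⟩
    refine ⟨s, t, hs, ht, ?_⟩
    have hx : x = p + (s • (v (k - 1) - v k) + t • (v (k + 1) - v k)) := by
      rw [← h]; abel
    rw [hx]; abel

/-- Claim 7 of the paper. All singular boundary points of `H` are
boundary points with respect to the same opposite pair of wedges. -/
theorem singular_same_pair
    (n : ℕ) (hn : 2 ≤ n) (v : ZMod (2 * n) → ℝ × ℝ)
    (hcw : ClockwiseConvex v) (hsym : CentSym n v)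
    (H : Set (ℝ × ℝ)) (p q : ℝ × ℝ) (i j : ZMod (2 * n))
    (hp : IsSingular n v H p) (hq : IsSingular n v H q)
    (hpi : IsBd v H i p) (hpi' : IsBd v H (i + (n : ZMod (2 * n))) p)
    (hqj : IsBd v H j q) (hqj' : IsBd v H (j + (n : ZMod (2 * n))) q) :
    ({j, j + (n : ZMod (2 * n))} : Set (ZMod (2 * n)))
      = ({i, i + (n : ZMod (2 * n))} : Set (ZMod (2 * n))) := by
  obtain ⟨c, hc⟩ := hsym
  set N : ZMod (2 * n) := (n : ZMod (2 * n)) with hN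
  have h1 : (1 : ZMod (2 * n)) ≠ 0 := by
    intro h
    have hdvd : (2 * n) ∣ 1 := by
      rw [← ZMod.natCast_eq_zero_iff]
      exact_mod_cast h
    have := Nat.le_of_dvd one_pos hdvd
    omega
  have h2 : (2 : ZMod (2 * n)) ≠ 0 := by
    intro h
    have hdvd : (2 * n) ∣ 2 := by
      rw [← ZMod.natCast_eq_zero_iff]
      exact_mod_cast h
    have := Nat.le_of_dvd two_pos hdvd
    omega
  have hNN : ∀ k : ZMod (2 * n), k + N + N = k := by
    intro k
    have hz : N + N = 0 := by
      have h0 : ((2 * n : ℕ) : ZMod (2 * n)) = 0 := ZMod.natCast_self _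
      calc N + N = ((n + n : ℕ) : ZMod (2 * n)) := by push_cast; ring
        _ = ((2 * n : ℕ) : ZMod (2 * n)) := by rw [two_mul]
        _ = 0 := h0
    rw [add_assoc, hz, add_zero]
  -- flipped edge vectors
  have hd1 : ∀ k : ZMod (2 * n), v (k + N - 1) - v (k + N) = -(v (k - 1) - v k) := by
    intro k
    have e1 : v (k + N - 1) = (2 : ℝ) • c - v (k - 1) := by
      rw [show k + N - 1 = (k - 1) + N by ring]; exact hc _
    rw [e1, hc k]
    abel
  have hd2 : ∀ k : ZMod (2 * n), v (k + N + 1) - v (k + N) = -(v (k + 1) - v k) := by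
    intro k
    have e1 : v (k + N + 1) = (2 : ℝ) • c - v (k + 1) := by
      rw [show k + N + 1 = (k + 1) + N by ring]; exact hc _
    rw [e1, hc k]
    abel
  have hab : ∀ k : ZMod (2 * n), 0 < cross (v (k - 1) - v k) (v (k + 1) - v k) := by
    intro k
    have hk1 : k - 1 ≠ k := by
      intro h; apply h1
      calc (1 : ZMod (2 * n)) = k - (k - 1) := by ring
        _ = k - k := by rw [h]
        _ = 0 := sub_self k
    have hk2 : k - 1 ≠ k + 1 := by
      intro h; apply h2
      calc (2 : ZMod (2 * n)) = (k + 1) - (k - 1) := by ring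
        _ = (k + 1) - (k + 1) := by rw [h]
        _ = 0 := sub_self _
    have h := hcw k (k - 1) hk1 hk2
    have e : cross (v (k - 1) - v k) (v (k + 1) - v k)
        = -cross (v (k + 1) - v k) (v (k - 1) - v k) := by
      simp only [cross, Prod.fst_sub, Prod.snd_sub]; ring
    rw [e]; linarith
  -- sign dichotomy at an opposite pair
  have hsign : ∀ (k : ZMod (2 * n)) (u : ℝ × ℝ),
      ¬(∃ s t : ℝ, 0 ≤ s ∧ 0 ≤ t ∧ u = s • (v (k - 1) - v k) + t • (v (k + 1) - v k)) →
      ¬(∃ s t : ℝ, 0 ≤ s ∧ 0 ≤ t ∧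
          u = s • (v (k + N - 1) - v (k + N)) + t • (v (k + N + 1) - v (k + N))) →
      LMax v u k ∨ LMax v u (k + N) := by
    intro k u hA hB
    rw [hd1 k, hd2 k] at hB
    set a := v (k - 1) - v k with ha
    set b := v (k + 1) - v k with hb
    have nA : ¬(0 ≤ cross a u ∧ 0 ≤ cross u b) :=
      fun h => hA (inCone_of a b u (hab k) h.1 h.2)
    have hab' : 0 < cross (-a) (-b) := by
      have e : cross (-a) (-b) = cross a b := by
        simp only [cross, Prod.fst_neg, Prod.snd_neg]; ring
      rw [e]; exact hab k
    have nB : ¬(0 ≤ cross (-a) u ∧ 0 ≤ cross u (-b)) :=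
      fun h => hB (inCone_of (-a) (-b) u hab' h.1 h.2)
    have ena : cross (-a) u = -cross a u := by
      simp only [cross, Prod.fst_neg, Prod.snd_neg]; ring
    have enb : cross u (-b) = -cross u b := by
      simp only [cross, Prod.fst_neg, Prod.snd_neg]; ring
    rw [ena, enb] at nB
    push_neg at nA nB
    have hcase : (cross a u < 0 ∧ 0 < cross u b) ∨ (0 < cross a u ∧ cross u b < 0) := by
      rcases lt_trichotomy (cross a u) 0 with h | h | h
      · left; exact ⟨h, by linarith [nB (by linarith)]⟩
      · exfalso
        have := nA (by linarith)
        have := nB (by linarith)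
        linarith
      · right; exact ⟨h, nA h.le⟩
    have e1 : cross (v k - v (k - 1)) u = -cross a u := by
      simp only [ha, cross, Prod.fst_sub, Prod.snd_sub]; ring
    have e2 : cross (v (k + 1) - v k) u = -cross u b := by
      simp only [hb, cross, Prod.fst_sub, Prod.snd_sub]; ring
    have e3 : cross (v (k + N) - v (k + N - 1)) u = cross a u := by
      have : v (k + N) - v (k + N - 1) = -(v (k + N - 1) - v (k + N)) := by abel
      rw [this, hd1 k, neg_neg]
    have e4 : cross (v (k + N + 1) - v (k + N)) u = cross u b := by
      rw [hd2 k]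
      simp only [hb, cross, Prod.fst_neg, Prod.snd_neg, Prod.fst_sub, Prod.snd_sub]; ring
    rcases hcase with ⟨hc1, hc2⟩ | ⟨hc1, hc2⟩
    · left
      exact ⟨by rw [e1]; linarith, by rw [e2]; linarith⟩
    · right
      exact ⟨by rw [e3]; linarith, by rw [e4]; linarith⟩
  -- transfer LMax under negation of d
  have hLflip : ∀ (k : ZMod (2 * n)) (u : ℝ × ℝ), LMax v (-u) k → LMax v u (k + N) := by
    intro k u ⟨hA, hB⟩
    have eA : cross (v k - v (k - 1)) (-u) = -cross (v k - v (k - 1)) u := by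
      simp only [cross, Prod.fst_neg, Prod.snd_neg]; ring
    have eB : cross (v (k + 1) - v k) (-u) = -cross (v (k + 1) - v k) u := by
      simp only [cross, Prod.fst_neg, Prod.snd_neg]; ring
    rw [eA] at hA; rw [eB] at hB
    constructor
    · have e3 : v (k + N) - v (k + N - 1) = v (k - 1) - v k := by
        have h' : v (k + N) - v (k + N - 1) = -(v (k + N - 1) - v (k + N)) := by abel
        rw [h', hd1 k, neg_neg]
      rw [e3]
      have e : cross (v (k - 1) - v k) u = -cross (v k - v (k - 1)) u := by
        simp only [cross, Prod.fst_sub, Prod.snd_sub]; ring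
      rw [e]; linarith
    · rw [hd2 k]
      have e : cross (-(v (k + 1) - v k)) u = -cross (v (k + 1) - v k) u := by
        simp only [cross, Prod.fst_neg, Prod.snd_neg]; ring
      rw [e]; linarith
  -- final pinning
  by_cases hji : j = i ∨ j = i + N
  · rcases hji with rfl | rfl
    · rfl
    · rw [hNN i, Set.pair_comm]
  · exfalso
    push_neg at hji
    have final : ∀ k₁ k₂ : ZMod (2 * n), (k₁ = i ∨ k₁ = i + N) → (k₂ = j ∨ k₂ = j + N) →
        k₁ = k₂ → False := by
      rintro k₁ k₂ (rfl | rfl) (rfl | rfl) h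
      · exact hji.1 h.symm
      · exact hji.2 (by rw [← hNN j, ← h])
      · exact hji.2 h.symm
      · refine hji.1 ?_
        have h2' : i + N + N = j + N + N := by rw [h]
        rw [hNN, hNN] at h2'
        exact h2'.symm
    by_cases hpq : p = q
    · -- then H = {p}, contradicting singularity of p
      subst hpq
      have hHp : ∀ x ∈ H, x = p := by
        intro x hx
        by_contra hxp
        have hw : ∀ k : ZMod (2 * n), IsBd v H k p → x ∉ Wedge v k p := by
          intro k hk hwk
          apply hxp
          have : x ∈ Wedge v k p ∩ H := ⟨hwk, hx⟩
          rw [hk.2] at this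
          exact this
        have w1 := hw i hpi
        have w2 := hw (i + N) hpi'
        have w3 := hw j hqj
        have w4 := hw (j + N) hqj'
        rw [mem_wedge_iff] at w1 w2 w3 w4
        have L1 := hsign i (x - p) w1 w2
        have L2 := hsign j (x - p) w3 w4
        have L1' : ∃ k₁, (k₁ = i ∨ k₁ = i + N) ∧ LMax v (x - p) k₁ := by
          rcases L1 with L | L
          exacts [⟨i, Or.inl rfl, L⟩, ⟨i + N, Or.inr rfl, L⟩]
        have L2' : ∃ k₂, (k₂ = j ∨ k₂ = j + N) ∧ LMax v (x - p) k₂ := by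
          rcases L2 with L | L
          exacts [⟨j, Or.inl rfl, L⟩, ⟨j + N, Or.inr rfl, L⟩]
        obtain ⟨k₁, hk₁, hL₁⟩ := L1'
        obtain ⟨k₂, hk₂, hL₂⟩ := L2'
        exact final k₁ k₂ hk₁ hk₂ (lmax_unique v hcw h1 h2 _ _ _ hL₁ hL₂)
      obtain ⟨i₁, n₁, i₂, n₂, _, _, _, hn₁, _⟩ := hp
      apply hn₁
      refine ⟨hpi.1, ?_⟩
      ext x
      simp only [Set.mem_inter_iff, Set.mem_singleton_iff]
      constructor
      · rintro ⟨-, hx⟩; exact hHp x hx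
      · rintro rfl
        exact ⟨⟨0, 0, le_rfl, le_rfl, by simp⟩, hpi.1⟩
    · -- p ≠ q
      have hw : ∀ (k : ZMod (2 * n)) (y z : ℝ × ℝ), IsBd v H k y → z ∈ H → z ≠ y →
          z ∉ Wedge v k y := by
        intro k y z hk hz hzy hwk
        apply hzy
        have : z ∈ Wedge v k y ∩ H := ⟨hwk, hz⟩
        rw [hk.2] at this
        exact this
      have w1 := hw i p q hpi hqj.1 (Ne.symm hpq)
      have w2 := hw (i + N) p q hpi' hqj.1 (Ne.symm hpq)
      have w3 := hw j q p hqj hpi.1 hpq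
      have w4 := hw (j + N) q p hqj' hpi.1 hpq
      rw [mem_wedge_iff] at w1 w2 w3 w4
      have L1 := hsign i (q - p) w1 w2
      have L2' := hsign j (p - q) w3 w4
      have hneg : p - q = -(q - p) := by abel
      rw [hneg] at L2'
      have L2 : LMax v (q - p) (j + N) ∨ LMax v (q - p) (j + N + N) := by
        rcases L2' with L | L
        · exact Or.inl (hLflip j (q - p) L)
        · exact Or.inr (hLflip (j + N) (q - p) L)
      rw [hNN j] at L2
      have L1' : ∃ k₁, (k₁ = i ∨ k₁ = i + N) ∧ LMax v (q - p) k₁ := by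
        rcases L1 with L | L
        exacts [⟨i, Or.inl rfl, L⟩, ⟨i + N, Or.inr rfl, L⟩]
      have L2'' : ∃ k₂, (k₂ = j ∨ k₂ = j + N) ∧ LMax v (q - p) k₂ := by
        rcases L2 with L | L
        exacts [⟨j + N, Or.inr rfl, L⟩, ⟨j, Or.inl rfl, L⟩]
      obtain ⟨k₁, hk₁, hL₁⟩ := L1'
      obtain ⟨k₂, hk₂, hL₂⟩ := L2''
      exact final k₁ k₂ hk₁ hk₂ (lmax_unique v hcw h1 h2 _ _ _ hL₁ hL₂)
end
end

section
/- Fix an index i, let u_i be the unit vector in the direction of (v_{i−1} − v_i)/‖v_{i−1} − v_i‖ + (v_{i+1} − v_i)/‖v_{i+1} − v_i‖ (the angular bisector of the wedge E_i), and let w_i be a nonzero vector perpendicular to u_i. Then: (a) for any two points p, q ∈ ℝ² with ⟨p − q, w_i⟩ = 0, either q ∈ E_i(p) or p ∈ E_i(q); and (b) for any H ⊆ ℝ², the map p ↦ ⟨p, w_i⟩ is injective on the set of E_i-boundary points of H. -/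
noncomputable section

/-- Euclidean length on `ℝ²`. -/
def len (a : ℝ × ℝ) : ℝ := Real.sqrt (a.1 ^ 2 + a.2 ^ 2)

/-- `u_i`: the unit vector in the direction of the angular bisector of the wedge `E_i`,
namely of `(v (i-1) - v i)/‖v (i-1) - v i‖ + (v (i+1) - v i)/‖v (i+1) - v i‖`. -/
def uVec {m : ℕ} (v : ZMod m → ℝ × ℝ) (i : ZMod m) : ℝ × ℝ :=
  (len ((len (v (i - 1) - v i))⁻¹ • (v (i - 1) - v i) +
        (len (v (i + 1) - v i))⁻¹ • (v (i + 1) - v i)))⁻¹ •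
    ((len (v (i - 1) - v i))⁻¹ • (v (i - 1) - v i) +
     (len (v (i + 1) - v i))⁻¹ • (v (i + 1) - v i))

lemma len_pos' {a : ℝ × ℝ} (ha : a ≠ 0) : 0 < len a := by
  have h : a.1 ≠ 0 ∨ a.2 ≠ 0 := by
    by_contra h
    push_neg at h
    exact ha (Prod.ext h.1 h.2)
  have hpos : 0 < a.1 ^ 2 + a.2 ^ 2 := by
    rcases h with h | h
    · have : 0 < a.1 ^ 2 := by positivity
      nlinarith [sq_nonneg a.2]
    · have : 0 < a.2 ^ 2 := by positivity
      nlinarith [sq_nonneg a.1]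
  exact Real.sqrt_pos.mpr hpos

/-- Let `w` be a nonzero vector perpendicular to the angular bisector
`u_i` of the wedge `E_i`. Then (a) any two points on a common line with direction `u_i`
are comparable by the wedge relation, and (b) the projection `p ↦ ⟨p, w⟩` is injective on
the set of `E_i`-boundary points of any `H ⊆ ℝ²`. -/
theorem projection_injective_on_boundary
    (n : ℕ) (hn : 2 ≤ n) (v : ZMod (2 * n) → ℝ × ℝ)
    (hcw : ClockwiseConvex v) (hsym : CentSym n v)
    (i : ZMod (2 * n)) (w : ℝ × ℝ) (hw : w ≠ 0) (hperp : dot (uVec v i) w = 0) :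
    (∀ p q : ℝ × ℝ, dot (p - q) w = 0 → q ∈ Wedge v i p ∨ p ∈ Wedge v i q) ∧
    (∀ H : Set (ℝ × ℝ),
      Set.InjOn (fun p => dot p w) {p : ℝ × ℝ | IsBd v H i p}) := by
  haveI : NeZero (2 * n) := ⟨by omega⟩
  set A : ℝ × ℝ := v (i - 1) - v i with hA
  set B : ℝ × ℝ := v (i + 1) - v i with hB
  have hne1 : (i - 1 : ZMod (2 * n)) ≠ i := by
    intro h
    have h1 : ((1 : ℕ) : ZMod (2 * n)) = 0 := by
      have := sub_eq_self.mp h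
      simpa using this
    rw [ZMod.natCast_eq_zero_iff] at h1
    have := Nat.le_of_dvd (by norm_num) h1
    omega
  have hne2 : (i - 1 : ZMod (2 * n)) ≠ i + 1 := by
    intro h
    have h2 : ((2 : ℕ) : ZMod (2 * n)) = 0 := by
      push_cast
      linear_combination -h
    rw [ZMod.natCast_eq_zero_iff] at h2
    have := Nat.le_of_dvd (by norm_num) h2
    omega
  have hcross : cross B A < 0 := hcw i (i - 1) hne1 hne2
  have hA0 : A ≠ 0 := by
    intro h
    rw [h] at hcross
    simp [cross] at hcross
  have hB0 : B ≠ 0 := by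
    intro h
    rw [h] at hcross
    simp [cross] at hcross
  have hla : 0 < len A := len_pos' hA0
  have hlb : 0 < len B := len_pos' hB0
  set S : ℝ × ℝ := (len A)⁻¹ • A + (len B)⁻¹ • B with hSdef
  have hcrS : cross B S = (len A)⁻¹ * cross B A := by
    simp only [cross, hSdef, Prod.fst_add, Prod.snd_add, Prod.smul_fst, Prod.smul_snd,
      smul_eq_mul]
    ring
  have hS0 : S ≠ 0 := by
    intro h
    rw [h] at hcrS
    simp only [cross, Prod.fst_zero, Prod.snd_zero, mul_zero, sub_zero] at hcrS
    have hpos : 0 < (len A)⁻¹ := by positivity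
    have hc' : B.1 * A.2 - B.2 * A.1 < 0 := hcross
    nlinarith
  have hls : 0 < len S := len_pos' hS0
  have hu : uVec v i = (len S)⁻¹ • S := rfl
  have hsw : dot S w = 0 := by
    rw [hu] at hperp
    simp only [dot, Prod.smul_fst, Prod.smul_snd, smul_eq_mul] at hperp
    have : (len S)⁻¹ * (S.1 * w.1 + S.2 * w.2) = 0 := by linarith [hperp]
    rcases mul_eq_zero.mp this with h | h
    · exact absurd h (by positivity)
    · simpa [dot] using h
  -- key: anything perpendicular to w is a multiple of S
  have hkey : ∀ x : ℝ × ℝ, dot x w = 0 → ∃ t : ℝ, x = t • S := by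
    intro x hx
    simp only [dot] at hx hsw
    have hcr : x.1 * S.2 - x.2 * S.1 = 0 := by
      have hw' : w.1 ≠ 0 ∨ w.2 ≠ 0 := by
        by_contra h
        push_neg at h
        exact hw (Prod.ext h.1 h.2)
      rcases hw' with h | h
      · have h1 : (x.1 * S.2 - x.2 * S.1) * w.1 = 0 := by
          linear_combination S.2 * hx - x.2 * hsw
        exact (mul_eq_zero.mp h1).resolve_right h
      · have h1 : (x.1 * S.2 - x.2 * S.1) * w.2 = 0 := by
          linear_combination x.1 * hsw - S.1 * hx
        exact (mul_eq_zero.mp h1).resolve_right h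
    have hS' : S.1 ≠ 0 ∨ S.2 ≠ 0 := by
      by_contra h
      push_neg at h
      exact hS0 (Prod.ext h.1 h.2)
    rcases hS' with h | h
    · refine ⟨x.1 / S.1, Prod.ext ?_ ?_⟩
      · simp only [Prod.smul_fst, smul_eq_mul]; field_simp
      · simp only [Prod.smul_snd, smul_eq_mul]; field_simp; linear_combination -hcr
    · refine ⟨x.2 / S.2, Prod.ext ?_ ?_⟩
      · simp only [Prod.smul_fst, smul_eq_mul]; field_simp; linear_combination hcr
      · simp only [Prod.smul_snd, smul_eq_mul]; field_simp
  have parta : ∀ p q : ℝ × ℝ, dot (p - q) w = 0 → q ∈ Wedge v i p ∨ p ∈ Wedge v i q := by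
    intro p q hpq
    have hx : dot (q - p) w = 0 := by
      simp only [dot, Prod.fst_sub, Prod.snd_sub] at hpq ⊢
      linarith
    obtain ⟨t, ht⟩ := hkey _ hx
    have h1 := congrArg Prod.fst ht
    have h2 := congrArg Prod.snd ht
    simp only [Prod.fst_sub, Prod.snd_sub, Prod.smul_fst, Prod.smul_snd, Prod.fst_add,
      Prod.snd_add, smul_eq_mul, hSdef] at h1 h2
    rcases le_or_gt 0 t with hts | hts
    · left
      refine ⟨t * (len A)⁻¹, t * (len B)⁻¹,
        mul_nonneg hts (by positivity), mul_nonneg hts (by positivity), Prod.ext ?_ ?_⟩ <;>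
        simp only [Prod.fst_add, Prod.snd_add, Prod.smul_fst, Prod.smul_snd, smul_eq_mul]
      · linear_combination h1
      · linear_combination h2
    · right
      refine ⟨(-t) * (len A)⁻¹, (-t) * (len B)⁻¹,
        mul_nonneg (by linarith) (by positivity), mul_nonneg (by linarith) (by positivity),
        Prod.ext ?_ ?_⟩ <;>
        simp only [Prod.fst_add, Prod.snd_add, Prod.smul_fst, Prod.smul_snd, smul_eq_mul]
      · linear_combination -h1
      · linear_combination -h2
  refine ⟨parta, ?_⟩
  intro H p hp q hq hpq
  simp only [Set.mem_setOf_eq, IsBd] at hp hq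
  simp only at hpq
  have hd : dot (p - q) w = 0 := by
    simp only [dot, Prod.fst_sub, Prod.snd_sub] at hpq ⊢
    linarith
  rcases parta p q hd with hc | hc
  · have : q ∈ Wedge v i p ∩ H := ⟨hc, hq.1⟩
    rw [hp.2] at this
    exact this.symm
  · have : p ∈ Wedge v i q ∩ H := ⟨hc, hp.1⟩
    rw [hq.2] at this
    exact this
end
end

section
/- For every bounded set A ⊆ ℝ there exists a function f : A → Bool such that for every interval I ⊆ ℝ, if I ∩ A is infinite then both {a ∈ I ∩ A : f(a) = true} and {a ∈ I ∩ A : f(a) = false} are infinite. -/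
/-!
One colouring can split countably many infinite sets `S i` at once, each receiving infinitely
many points of both colours: choose pairwise distinct points `z (i, j) ∈ S i` and colour them by
the parity of `j`. It therefore suffices to find countably many infinite subsets of `A` such
that every interval meeting `A` in an infinite set contains one of them. By Bolzano–Weierstrass
such an interval `I` contains a one-sided neighbourhood `(c, p)` of a one-sided accumulation
point `p` of `I ∩ A`. Either some interval with rational endpoints inside `(c, p)` meets `A` in
an infinite set, or, for a rational `q ∈ (c, p)`, the point `p` is the supremum of the `x` with
`A ∩ (q, x)` finite, so that `A ∩ (q, p)` is determined by `q`.
-/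

open Set Filter Topology Function

section Coloring

variable {α : Type*}

theorem exists_injective_forall_mem {T : ℕ → Set α} (hT : ∀ n, (T n).Infinite) :
    ∃ z : ℕ → α, Injective z ∧ ∀ n, z n ∈ T n := by
  classical
  choose g hgT hgF using fun n (F : Finset α) => (hT n).exists_notMem_finset F
  let used : ℕ → Finset α := fun n => Nat.rec ∅ (fun k F => insert (g k F) F) n
  have mem_used {k n : ℕ} (hkn : k < n) : g k (used k) ∈ used n := by
    induction hkn with
    | refl => exact Finset.mem_insert_self _ _
    | step _ ih => exact Finset.mem_insert_of_mem ih
  refine ⟨fun n => g n (used n), .of_lt_imp_ne fun m n hmn hEq => ?_, fun n => hgT _ _⟩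
  exact hgF n (used n) (hEq ▸ mem_used hmn)

theorem exists_bool_coloring_infinite_of_countable {𝓕 : Set (Set α)} (h𝓕 : 𝓕.Countable)
    (hinf : ∀ S ∈ 𝓕, S.Infinite) :
    ∃ f : α → Bool, ∀ S ∈ 𝓕,
      {x ∈ S | f x = true}.Infinite ∧ {x ∈ S | f x = false}.Infinite := by
  rcases 𝓕.eq_empty_or_nonempty with rfl | hne
  · exact ⟨fun _ => true, by simp⟩
  obtain ⟨e, rfl⟩ := h𝓕.exists_eq_range hne
  obtain ⟨z', hz'inj, hz'mem⟩ :=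
    exists_injective_forall_mem (T := fun n => e (Nat.unpair n).1) fun n => hinf _ ⟨_, rfl⟩
  let z : ℕ × ℕ → α := z' ∘ Nat.pairEquiv
  have hz : Injective z := hz'inj.comp Nat.pairEquiv.injective
  classical
  refine ⟨fun x => decide (∃ p : ℕ × ℕ, z (p.1, 2 * p.2) = x), ?_⟩
  rintro _ ⟨i, rfl⟩
  have hmem (j : ℕ) : z (i, j) ∈ e i := by simpa [z] using hz'mem (Nat.pair i j)
  constructor
  · refine infinite_of_injective_forall_mem (f := fun j => z (i, 2 * j))
      (fun j k h => by simpa using hz h) fun j => ⟨hmem _, ?_⟩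
    simp only [decide_eq_true_eq]
    exact ⟨(i, j), rfl⟩
  · refine infinite_of_injective_forall_mem (f := fun j => z (i, 2 * j + 1))
      (fun j k h => by simpa using hz h) fun j => ⟨hmem _, ?_⟩
    simp only [decide_eq_false_iff_not, not_exists]
    intro p h
    have := congrArg Prod.snd (hz h)
    omega

end Coloring

section IntervalTraces

variable {α : Type*} [ConditionallyCompleteLinearOrder α] {D A I : Set α} {c p : α}

/-- Besides the traces of `A` on intervals with endpoints in `D`, this contains `A ∩ Ioo q p`
whenever `p` is the first point above `q` at which `A` accumulates; these catch the left
accumulation points of `A` that no interval with endpoints in `D` isolates. -/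
def intervalTraces (D A : Set α) : Set (Set α) :=
  (fun x : α × α => A ∩ Ioo x.1 x.2) '' (D ×ˢ D) ∪
    (fun q => A ∩ Ioo q (sSup {c | (A ∩ Ioo q c).Finite})) '' D

theorem Set.Countable.intervalTraces (hD : D.Countable) : (intervalTraces D A).Countable :=
  ((hD.prod hD).image _).union (hD.image _)

variable [TopologicalSpace α] [OrderTopology α] [DenselyOrdered α]

theorem exists_infinite_mem_intervalTraces_subset_Ioo (hD : Dense D)
    (hp : ∀ c < p, (A ∩ Ioo c p).Infinite) (hc : c < p) :
    ∃ S ∈ intervalTraces D A, S.Infinite ∧ S ⊆ A ∩ Ioo c p := by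
  by_cases h : ∃ q ∈ D, ∃ r ∈ D, c < q ∧ r < p ∧ (A ∩ Ioo q r).Infinite
  · obtain ⟨q, hq, r, hr, hcq, hrp, hinf⟩ := h
    exact ⟨_, .inl ⟨(q, r), ⟨hq, hr⟩, rfl⟩, hinf,
      inter_subset_inter_right _ (Ioo_subset_Ioo hcq.le hrp.le)⟩
  push Not at h
  obtain ⟨q, hq, hcq, hqp⟩ := hD.exists_between hc
  have hfinite : {c' | (A ∩ Ioo q c').Finite} = Iio p := by
    ext c'
    refine ⟨fun hfin => lt_of_not_ge fun hpc => hp q hqp (hfin.subset ?_), fun hc'p => ?_⟩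
    · exact inter_subset_inter_right _ (Ioo_subset_Ioo_right hpc)
    · obtain ⟨r, hr, hc'r, hrp⟩ := hD.exists_between hc'p
      exact (h q hq r hr hcq hrp).subset
        (inter_subset_inter_right _ (Ioo_subset_Ioo_right hc'r.le))
  have hsup : sSup {c' | (A ∩ Ioo q c').Finite} = p := by
    rw [hfinite, isLUB_Iio.csSup_eq ⟨q, hqp⟩]
  exact ⟨A ∩ Ioo q p, .inr ⟨q, hq, by rw [← hsup]⟩, hp q hqp,
    inter_subset_inter_right _ (Ioo_subset_Ioo_left hcq.le)⟩

theorem exists_infinite_mem_intervalTraces_subset_of_frequently_nhdsLT (hD : Dense D)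
    (hI : I.OrdConnected) (h : ∃ᶠ x in 𝓝[<] p, x ∈ I ∩ A) :
    ∃ S ∈ intervalTraces D A, S.Infinite ∧ S ⊆ I ∩ A := by
  obtain ⟨c, ⟨hcI, -⟩, hcp⟩ := (h.and_eventually self_mem_nhdsWithin).exists
  have hbasis := nhdsLT_basis_of_exists_lt ⟨c, hcp⟩
  have hIoo : Ioo c p ⊆ I := fun y hy => by
    obtain ⟨x, ⟨hyx, -⟩, hxI, -⟩ := hbasis.frequently_iff.mp h y hy.2
    exact hI.out hcI hxI ⟨hy.1.le, hyx.le⟩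
  have hacc : ∀ c' < p, (A ∩ Ioo c' p).Infinite := fun c' hc' =>
    frequently_cofinite_iff_infinite.mp <| Frequently.filter_mono
      ((h.and_eventually (Ioo_mem_nhdsLT hc')).mono fun x hx => ⟨hx.1.2, hx.2⟩)
      ((nhdsWithin_mono p fun _ hx => ne_of_lt hx).trans (nhdsNE_le_cofinite p))
  obtain ⟨S, hS, hSinf, hSsub⟩ := exists_infinite_mem_intervalTraces_subset_Ioo hD hacc hcp
  exact ⟨S, hS, hSinf, fun x hx => ⟨hIoo (hSsub hx).2, (hSsub hx).1⟩⟩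

end IntervalTraces

theorem Real.exists_countable_infinite_family_subset_of_isBounded {A : Set ℝ}
    (hA : Bornology.IsBounded A) :
    ∃ 𝓕 : Set (Set ℝ), 𝓕.Countable ∧ (∀ S ∈ 𝓕, S.Infinite) ∧
      ∀ I : Set ℝ, I.OrdConnected → (I ∩ A).Infinite → ∃ S ∈ 𝓕, S ⊆ I ∩ A := by
  let D : Set ℝ := range ((↑) : ℚ → ℝ)
  have hD : Dense D := Rat.denseRange_cast
  have hDc : D.Countable := countable_range _
  -- Right accumulation points of `A` are left accumulation points in `ℝᵒᵈ`.
  let D' : Set ℝᵒᵈ := OrderDual.ofDual ⁻¹' D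
  have hD' : Dense D' := hD
  let 𝓕' : Set (Set ℝᵒᵈ) := intervalTraces D' (OrderDual.ofDual ⁻¹' A)
  have h𝓕' : 𝓕'.Countable := (hDc.preimage OrderDual.ofDual.injective).intervalTraces
  let 𝓕 : Set (Set ℝ) := intervalTraces D A ∪ 𝓕'
  have h𝓕 : 𝓕.Countable := hDc.intervalTraces.union h𝓕'
  refine ⟨{S ∈ 𝓕 | S.Infinite}, h𝓕.mono (sep_subset _ _), fun _ hS => hS.2,
    fun I hI hIA => ?_⟩
  obtain ⟨p, -, hp⟩ := hIA.exists_accPt_of_subset_isCompact hA.isCompact_closure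
    (inter_subset_right.trans subset_closure)
  rcases frequently_sup.mp ((nhdsLT_sup_nhdsGT p).symm ▸ accPt_iff_frequently_nhdsNE.mp hp)
    with hleft | hright
  · obtain ⟨S, hS, hSinf, hSsub⟩ :=
      exists_infinite_mem_intervalTraces_subset_of_frequently_nhdsLT hD hI hleft
    exact ⟨S, ⟨.inl hS, hSinf⟩, hSsub⟩
  · obtain ⟨S, hS, hSinf, hSsub⟩ :=
      exists_infinite_mem_intervalTraces_subset_of_frequently_nhdsLT (p := OrderDual.toDual p)
        hD' hI.dual hright
    exact ⟨S, ⟨.inr hS, hSinf⟩, hSsub⟩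

/-- Every bounded set `A ⊆ ℝ` admits a two-coloring such that every
interval (order-convex subset of `ℝ`) meeting `A` in infinitely many points contains
infinitely many points of `A` of each color. -/
theorem bounded_real_set_interval_coloring
    (A : Set ℝ) (hA : Bornology.IsBounded A) :
    ∃ f : ℝ → Bool,
      ∀ I : Set ℝ, I.OrdConnected → (I ∩ A).Infinite →
        {a ∈ I ∩ A | f a = true}.Infinite ∧ {a ∈ I ∩ A | f a = false}.Infinite := by
  obtain ⟨𝓕, h𝓕, hinf, hcover⟩ :=
    Real.exists_countable_infinite_family_subset_of_isBounded hA
  obtain ⟨f, hf⟩ := exists_bool_coloring_infinite_of_countable h𝓕 hinf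
  refine ⟨f, fun I hI hIA => ?_⟩
  obtain ⟨S, hS, hSI⟩ := hcover I hI hIA
  exact ⟨(hf S hS).1.mono fun x hx => ⟨hSI hx.1, hx.2⟩,
    (hf S hS).2.mono fun x hx => ⟨hSI hx.1, hx.2⟩⟩
end

section
/- For every bounded set H ⊆ ℝ² there exists a function f : H → Bool such that for every point x ∈ ℝ² that is an accumulation point of H and every ε > 0, the open ball of radius ε around x contains infinitely many points q ∈ H with f(q) = true and infinitely many points r ∈ H with f(r) = false. -/
/-!
The plane has a countable basis `(V_i)`. Choose, for every `i` with `H ∩ V_i` infinite and every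
colour `b`, infinitely many points of `H ∩ V_i`, all choices pairwise distinct; this is possible
by a recursion in which each pick avoids the finitely many earlier ones. Colour each chosen point
by its label. Every neighbourhood of an accumulation point `x` of `H` contains some `V_i ∋ x`,
and `H ∩ V_i` is then infinite.
-/

open Function Filter Topology

theorem exists_injective_forall_mem_of_infinite {ι α : Type*} [Countable ι] {A : ι → Set α}
    (hA : ∀ i, (A i).Infinite) : ∃ g : ι → α, Injective g ∧ ∀ i, g i ∈ A i := by
  classical
  let _ := Encodable.ofCountable ι
  choose pick pick_mem pick_fresh using fun i (s : Finset α) => (hA i).exists_notMem_finset s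
  -- `used n` holds the picks made for the indices with code `< n`
  let used : ℕ → Finset α := fun n =>
    Nat.rec ∅ (fun n s => (Encodable.decode (α := ι) n).elim s fun i => insert (pick i s) s) n
  have used_mono : Monotone used := monotone_nat_of_le_succ fun n => by
    cases h : Encodable.decode (α := ι) n <;> simp [used, h, Finset.subset_insert]
  let g : ι → α := fun i => pick i (used (Encodable.encode i))
  have g_mem_used (i : ι) : g i ∈ used (Encodable.encode i + 1) := by
    simp [used, g, Encodable.encodek]
  have g_ne_of_lt {i j : ι} (h : Encodable.encode i < Encodable.encode j) : g i ≠ g j :=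
    fun hij => pick_fresh j _ (hij ▸ used_mono h (g_mem_used i))
  refine ⟨g, fun i j hij => ?_, fun i => pick_mem i _⟩
  rcases lt_trichotomy (Encodable.encode i) (Encodable.encode j) with h | h | h
  · exact absurd hij (g_ne_of_lt h)
  · exact Encodable.encode_injective h
  · exact absurd hij.symm (g_ne_of_lt h)

theorem exists_bool_coloring_infinite {ι α : Type*} [Countable ι] (T : ι → Set α) :
    ∃ f : α → Bool, ∀ i, (T i).Infinite → ∀ b, {q ∈ T i | f q = b}.Infinite := by
  obtain ⟨g, g_inj, g_mem⟩ := exists_injective_forall_mem_of_infinite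
    (A := fun p : {i // (T i).Infinite} × Bool × ℕ => T p.1) fun p => p.1.2
  refine ⟨extend g (fun p => p.2.1) fun _ => false, fun i hi b => ?_⟩
  refine Set.infinite_of_injective_forall_mem (f := fun k => g (⟨i, hi⟩, b, k)) ?_ fun k => ?_
  · intro k l hkl
    simpa using g_inj hkl
  · exact ⟨g_mem (⟨i, hi⟩, b, k), g_inj.extend_apply _ _ _⟩

theorem exists_bool_coloring_accPt {X : Type*} [TopologicalSpace X] [SecondCountableTopology X]
    [T1Space X] (H : Set X) :
    ∃ f : X → Bool, ∀ x, AccPt x (𝓟 H) → ∀ U ∈ 𝓝 x, ∀ b, {q ∈ H ∩ U | f q = b}.Infinite := by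
  obtain ⟨B, hB_countable, -, hB⟩ := TopologicalSpace.exists_countable_basis X
  have := hB_countable.to_subtype
  obtain ⟨f, hf⟩ := exists_bool_coloring_infinite fun V : B => H ∩ V
  refine ⟨f, fun x hx U hU b => ?_⟩
  obtain ⟨V, hVB, hxV, hVU⟩ := hB.mem_nhds_iff.1 hU
  have hHV : (H ∩ V).Infinite := by
    rw [Set.inter_comm]
    exact Set.Infinite.of_accPt (hx.nhds_inter (hB.mem_nhds hVB hxV))
  exact (hf ⟨V, hVB⟩ hHV b).mono fun q hq => ⟨⟨hq.1.1, hVU hq.1.2⟩, hq.2⟩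

theorem bounded_planar_set_accumulation_coloring_general
    (H : Set (ℝ × ℝ)) :
    ∃ f : ℝ × ℝ → Bool,
      ∀ x : ℝ × ℝ, (∀ U ∈ nhds x, ∃ q ∈ H, q ≠ x ∧ q ∈ U) →
        ∀ ε : ℝ, 0 < ε →
          {q ∈ H ∩ Metric.ball x ε | f q = true}.Infinite ∧
          {q ∈ H ∩ Metric.ball x ε | f q = false}.Infinite := by
  obtain ⟨f, hf⟩ := exists_bool_coloring_accPt H
  refine ⟨f, fun x hx ε hε => ?_⟩
  have hacc : AccPt x (𝓟 H) :=
    accPt_iff_nhds.2 fun U hU => (hx U hU).imp fun q ⟨hqH, hqx, hqU⟩ => ⟨⟨hqU, hqH⟩, hqx⟩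
  exact ⟨hf x hacc _ (Metric.ball_mem_nhds x hε) true, hf x hacc _ (Metric.ball_mem_nhds x hε) false⟩

/-- Every bounded set `H ⊆ ℝ²` admits a two-coloring such that around
every accumulation point of `H`, every open ball contains infinitely many points of `H`
of each color. -/
theorem bounded_planar_set_accumulation_coloring
    (H : Set (ℝ × ℝ)) (hH : Bornology.IsBounded H) :
    ∃ f : ℝ × ℝ → Bool,
      ∀ x : ℝ × ℝ, (∀ U ∈ nhds x, ∃ q ∈ H, q ≠ x ∧ q ∈ U) →
        ∀ ε : ℝ, 0 < ε →
          {q ∈ H ∩ Metric.ball x ε | f q = true}.Infinite ∧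
          {q ∈ H ∩ Metric.ball x ε | f q = false}.Infinite :=
  bounded_planar_set_accumulation_coloring_general H
end

section
/- Let H ⊆ ℝ² be bounded, let a ∈ ℝ² and fix an index i. Suppose that some point of H lies in the topological interior of E_i(a), and that no point of H ∩ E_i(a) is an E_i-boundary point of H (i.e., for every p ∈ H ∩ E_i(a) there exists q ∈ H with q ≠ p and q ∈ E_i(p)). Then there exists a point x in the topological interior of E_i(a) that is an accumulation point of H. -/
noncomputable section

/-- If some point of a bounded set `H` lies in the interior of `E_i(a)`
and no point of `H ∩ E_i(a)` is an `E_i`-boundary point of `H`, then the interior of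
`E_i(a)` contains an accumulation point of `H`. -/
theorem accumulation_point_in_wedge_interior
    (n : ℕ) (hn : 2 ≤ n) (v : ZMod (2 * n) → ℝ × ℝ)
    (hcw : ClockwiseConvex v) (hsym : CentSym n v)
    (H : Set (ℝ × ℝ)) (hH : Bornology.IsBounded H)
    (a : ℝ × ℝ) (i : ZMod (2 * n))
    (hint : ∃ p ∈ H, p ∈ interior (Wedge v i a))
    (hnobd : ∀ p ∈ H ∩ Wedge v i a, ∃ q ∈ H, q ≠ p ∧ q ∈ Wedge v i p) :
    ∃ x ∈ interior (Wedge v i a), ∀ U ∈ nhds x, ∃ q ∈ H, q ≠ x ∧ q ∈ U := by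
  classical
  obtain ⟨p₀, hp₀H, hp₀int⟩ := hint
  set u : ℝ × ℝ := v (i - 1) - v i with hu
  set w : ℝ × ℝ := v (i + 1) - v i with hw
  -- positivity of cross u w
  have h1ne : (i - 1 : ZMod (2*n)) ≠ i := by
    intro h
    have h1 : (1 : ZMod (2*n)) = 0 := by linear_combination -h
    have h1' : ((1:ℕ) : ZMod (2*n)) = 0 := by exact_mod_cast h1
    have := (ZMod.natCast_eq_zero_iff 1 (2*n)).mp h1'
    have := Nat.le_of_dvd (by norm_num) this
    omega
  have h2ne : (i - 1 : ZMod (2*n)) ≠ i + 1 := by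
    intro h
    have h1 : (2 : ZMod (2*n)) = 0 := by linear_combination -h
    have h1' : ((2:ℕ) : ZMod (2*n)) = 0 := by exact_mod_cast h1
    have := (ZMod.natCast_eq_zero_iff 2 (2*n)).mp h1'
    have := Nat.le_of_dvd (by norm_num) this
    omega
  have hcwu : cross w u < 0 := hcw i (i - 1) h1ne h2ne
  have hc : 0 < cross u w := by
    have : cross u w = -(cross w u) := by simp [cross]; ring
    rw [this]; linarith
  have hc' : cross u w ≠ 0 := ne_of_gt hc
  -- wedge is additive
  have hadd : ∀ p q : ℝ × ℝ, q ∈ Wedge v i p → Wedge v i q ⊆ Wedge v i p := by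
    rintro p q ⟨s, t, hs, ht, rfl⟩ x ⟨s', t', hs', ht', rfl⟩
    exact ⟨s + s', t + t', by linarith, by linarith, by
      rw [← hu, ← hw]
      simp only [add_smul]; abel⟩
  have hself : ∀ p : ℝ × ℝ, p ∈ Wedge v i p := fun p =>
    ⟨0, 0, le_refl _, le_refl _, by simp⟩
  -- halfspace characterization and closedness
  have hchar : ∀ p x : ℝ × ℝ, x ∈ Wedge v i p ↔
      0 ≤ cross (x - p) w ∧ 0 ≤ cross u (x - p) := by
    intro p x
    constructor
    · rintro ⟨s, t, hs, ht, rfl⟩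
      rw [← hu, ← hw]
      constructor
      · have : cross (p + s • u + t • w - p) w = s * cross u w := by
          simp [cross, Prod.fst_add, Prod.snd_add, Prod.smul_fst, Prod.smul_snd,
            smul_eq_mul]; ring
        rw [this]; positivity
      · have : cross u (p + s • u + t • w - p) = t * cross u w := by
          simp [cross, Prod.fst_add, Prod.snd_add, Prod.smul_fst, Prod.smul_snd,
            smul_eq_mul]; ring
        rw [this]; positivity
    · rintro ⟨h1, h2⟩
      have hdec : (cross (x - p) w) • u + (cross u (x - p)) • w
          = (cross u w) • (x - p) := by
        apply Prod.ext <;>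
          simp only [cross, Prod.fst_add, Prod.snd_add, Prod.smul_fst, Prod.smul_snd,
            smul_eq_mul, Prod.fst_sub, Prod.snd_sub] <;> ring
      refine ⟨cross (x - p) w / cross u w, cross u (x - p) / cross u w,
        div_nonneg h1 hc.le, div_nonneg h2 hc.le, ?_⟩
      rw [← hu, ← hw]
      have hh : (cross (x - p) w / cross u w) • u
          + (cross u (x - p) / cross u w) • w = x - p := by
        rw [div_eq_inv_mul, div_eq_inv_mul, mul_smul, mul_smul, ← smul_add, hdec,
          inv_smul_smul₀ hc']
      rw [add_assoc, hh]
      abel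
  have hclosed : IsClosed (Wedge v i p₀) := by
    have hset : Wedge v i p₀ =
        {x | 0 ≤ cross (x - p₀) w} ∩ {x | 0 ≤ cross u (x - p₀)} := by
      ext x; simpa using hchar p₀ x
    rw [hset]
    have c1 : Continuous fun x : ℝ × ℝ => cross (x - p₀) w := by
      unfold cross; fun_prop
    have c2 : Continuous fun x : ℝ × ℝ => cross u (x - p₀) := by
      unfold cross; fun_prop
    exact (isClosed_le continuous_const c1).inter (isClosed_le continuous_const c2)
  -- Wedge p₀ ⊆ interior (Wedge a)
  have hkey : Wedge v i p₀ ⊆ interior (Wedge v i a) := by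
    rintro x ⟨s, t, hs, ht, rfl⟩
    rw [← hu, ← hw]
    set d : ℝ × ℝ := s • u + t • w with hd
    have hxeq : p₀ + s • u + t • w = p₀ + d := by rw [hd]; abel
    rw [hxeq]
    apply mem_interior.mpr
    refine ⟨(fun y => y + d) '' interior (Wedge v i a), ?_, ?_, ?_⟩
    · rintro _ ⟨y, hy, rfl⟩
      have hyW : y ∈ Wedge v i a := interior_subset hy
      have : y + d ∈ Wedge v i y := ⟨s, t, hs, ht, by rw [hd]; abel⟩
      exact hadd a y hyW this
    · exact (isOpenMap_add_right d) _ isOpen_interior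
    · exact ⟨p₀, hp₀int, rfl⟩
  have hp₀W : p₀ ∈ Wedge v i a := interior_subset hp₀int
  -- strictly increasing functional
  set f : ℝ × ℝ → ℝ := fun x => cross x w + cross u x with hf
  have hmono : ∀ p q : ℝ × ℝ, q ∈ Wedge v i p → q ≠ p → f p < f q := by
    rintro p q ⟨s, t, hs, ht, rfl⟩ hne
    rw [← hu, ← hw] at hne ⊢
    have heq : f (p + s • u + t • w) = f p + (s + t) * cross u w := by
      simp only [hf, cross, Prod.fst_add, Prod.snd_add, Prod.smul_fst, Prod.smul_snd,
        smul_eq_mul]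
      ring
    rw [heq]
    have hst : 0 < s + t := by
      rcases lt_or_eq_of_le (by linarith : (0:ℝ) ≤ s + t) with h | h
      · exact h
      · exfalso
        have hs0 : s = 0 := by linarith
        have ht0 : t = 0 := by linarith
        apply hne
        simp [hs0, ht0]
    nlinarith
  -- the recursive sequence
  set F : ℝ × ℝ → ℝ × ℝ := fun p =>
    if h : p ∈ H ∩ Wedge v i a then (hnobd p h).choose else p with hFdef
  have hF : ∀ p, p ∈ H ∩ Wedge v i a →
      F p ∈ H ∧ F p ≠ p ∧ F p ∈ Wedge v i p := by
    intro p h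
    have := (hnobd p h).choose_spec
    simp only [hFdef, dif_pos h]
    exact ⟨this.1, this.2.1, this.2.2⟩
  set seq : ℕ → ℝ × ℝ := fun k => F^[k] p₀ with hseqdef
  have hseq : ∀ k, seq k ∈ H ∧ seq k ∈ Wedge v i p₀ := by
    intro k
    induction k with
    | zero => exact ⟨hp₀H, hself p₀⟩
    | succ k ih =>
      have hmem : seq k ∈ H ∩ Wedge v i a :=
        ⟨ih.1, interior_subset (hkey ih.2)⟩
      have hstep := hF (seq k) hmem
      have hiter : seq (k + 1) = F (seq k) := Function.iterate_succ_apply' F k p₀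
      rw [hiter]
      exact ⟨hstep.1, hadd p₀ (seq k) ih.2 hstep.2.2⟩
  have hsucc : ∀ k, f (seq k) < f (seq (k + 1)) := by
    intro k
    have hmem : seq k ∈ H ∩ Wedge v i a :=
      ⟨(hseq k).1, interior_subset (hkey (hseq k).2)⟩
    have hstep := hF (seq k) hmem
    have hiter : seq (k + 1) = F (seq k) := Function.iterate_succ_apply' F k p₀
    rw [hiter]
    exact hmono (seq k) (F (seq k)) hstep.2.2 hstep.2.1
  have hsm : StrictMono (fun k => f (seq k)) := strictMono_nat_of_lt_succ hsucc
  have hinj : Function.Injective seq := fun a b h => hsm.injective (congrArg f h)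
  -- compactness
  obtain ⟨R, hR⟩ := hH.subset_closedBall (0 : ℝ × ℝ)
  have hK : IsCompact (Wedge v i p₀ ∩ Metric.closedBall 0 R) :=
    (isCompact_closedBall (0 : ℝ × ℝ) R).inter_left hclosed
  have hmemK : ∀ k, seq k ∈ Wedge v i p₀ ∩ Metric.closedBall 0 R :=
    fun k => ⟨(hseq k).2, hR (hseq k).1⟩
  obtain ⟨x, hxK, φ, hφ, htend⟩ := hK.tendsto_subseq hmemK
  refine ⟨x, hkey hxK.1, ?_⟩
  intro U hU
  have hev : ∀ᶠ j in Filter.atTop, seq (φ j) ∈ U := htend hU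
  obtain ⟨N, hN⟩ := Filter.eventually_atTop.mp hev
  have hN1 : seq (φ N) ∈ U := hN N le_rfl
  have hN2 : seq (φ (N + 1)) ∈ U := hN (N + 1) (Nat.le_succ N)
  have hne : seq (φ N) ≠ seq (φ (N + 1)) := by
    intro h
    exact absurd (hφ.injective (hinj h)) (by omega)
  by_cases hx1 : seq (φ N) = x
  · exact ⟨seq (φ (N + 1)), (hseq _).1, by rw [← hx1]; exact hne.symm, hN2⟩
  · exact ⟨seq (φ N), (hseq _).1, hx1, hN1⟩
end
end

section
/- There exists a real number x > 0 (depending only on the vertices v_1, …, v_m) such that for every closed axis-parallel square Q of side length x and every p ∈ ℝ², there exist an index i ∈ {1, …, m} and a point q ∈ ℝ² with (p + S) ∩ Q = E_i(q) ∩ Q; that is, every translate of S intersects every sufficiently small square exactly like the translate of one of its wedges. -/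
noncomputable section

/-!
The polygon `S` is the intersection of the closed half-planes `edgeCross v j ≤ 0` to the right of
its directed edges, and the wedge at `v k` is the intersection of the two half-planes of the edges
at `v k`. A point of `S` lies strictly inside all half-planes except those of at most two
consecutive edges, so the open sets `vertexRegion v k`, on which `S` agrees with the wedge at `v k`,
cover `S`. Half a Lebesgue number `δ` of this cover works: a square of side `δ / 2` that meets
`p + S` lies in `p + vertexRegion v k` for some `k`, and a square missing `p + S` is also missed by
a far translate of any wedge.
-/

lemma Prod.dist_le_of_mem_Icc {x y a b : ℝ × ℝ} (hx : x ∈ Set.Icc a b) (hy : y ∈ Set.Icc a b) :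
    dist x y ≤ dist a b := by
  rw [Prod.dist_eq, Prod.dist_eq]
  exact max_le_max
    (Real.dist_le_of_mem_uIcc (Set.Icc_subset_uIcc ⟨hx.1.1, hx.2.1⟩)
      (Set.Icc_subset_uIcc ⟨hy.1.1, hy.2.1⟩))
    (Real.dist_le_of_mem_uIcc (Set.Icc_subset_uIcc ⟨hx.1.2, hx.2.2⟩)
      (Set.Icc_subset_uIcc ⟨hy.1.2, hy.2.2⟩))

lemma ZMod.sub_one_ne_self {m : ℕ} (hm : m ≠ 1) (k : ZMod m) : k - 1 ≠ k :=
  fun h => hm (ZMod.one_eq_zero_iff.mp (sub_eq_self.mp h))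

lemma ZMod.add_one_ne_self {m : ℕ} (hm : m ≠ 1) (k : ZMod m) : k + 1 ≠ k :=
  fun h => hm (ZMod.one_eq_zero_iff.mp (add_eq_left.mp h))

lemma ZMod.sub_one_ne_add_one {m : ℕ} (hm : 3 ≤ m) (k : ZMod m) : k - 1 ≠ k + 1 := by
  intro h
  have h2 : ((2 : ℕ) : ZMod m) = 0 := by push_cast; linear_combination -h
  have := Nat.le_of_dvd two_pos ((ZMod.natCast_eq_zero_iff 2 m).mp h2)
  omega

lemma cross_smul_right (a b : ℝ × ℝ) (r : ℝ) : cross a (r • b) = r * cross a b := by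
  simp only [cross, Prod.smul_fst, Prod.smul_snd, smul_eq_mul]; ring

/-- Cramer's rule for a basis `a, b` of `ℝ × ℝ`. -/
lemma eq_smul_add_smul_of_cross_ne_zero {a b : ℝ × ℝ} (hab : cross a b ≠ 0) (y : ℝ × ℝ) :
    y = (cross y b / cross a b) • a + (cross a y / cross a b) • b := by
  simp only [cross] at hab ⊢
  ext <;> simp only [Prod.fst_add, Prod.snd_add, Prod.smul_fst, Prod.smul_snd, smul_eq_mul] <;>
    rw [div_mul_eq_mul_div, div_mul_eq_mul_div, ← add_div, eq_div_iff hab] <;> ring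

variable {m : ℕ} {v : ZMod m → ℝ × ℝ}

/-- Negative exactly when `y` lies strictly to the right of the directed edge `v j → v (j + 1)`. -/
def edgeCross (v : ZMod m → ℝ × ℝ) (j : ZMod m) (y : ℝ × ℝ) : ℝ :=
  cross (v (j + 1) - v j) (y - v j)

lemma continuous_edgeCross (v : ZMod m → ℝ × ℝ) (j : ZMod m) : Continuous (edgeCross v j) := by
  unfold edgeCross cross
  fun_prop

lemma edgeCross_sub (v : ZMod m → ℝ × ℝ) (j : ZMod m) (y w : ℝ × ℝ) :
    edgeCross v j (y - w) = edgeCross v j y - cross (v (j + 1) - v j) w := by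
  simp only [edgeCross, cross, Prod.fst_sub, Prod.snd_sub]; ring

lemma edgeCross_convexComb (v : ZMod m → ℝ × ℝ) (j : ZMod m) {a b : ℝ} (hab : a + b = 1)
    (x y : ℝ × ℝ) : edgeCross v j (a • x + b • y) = a * edgeCross v j x + b * edgeCross v j y := by
  obtain rfl : b = 1 - a := by linarith
  simp only [edgeCross, cross, Prod.smul_fst, Prod.smul_snd, Prod.fst_add, Prod.snd_add,
    Prod.fst_sub, Prod.snd_sub, smul_eq_mul]
  ring

lemma edgeCross_self (v : ZMod m → ℝ × ℝ) (j : ZMod m) : edgeCross v j (v j) = 0 := by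
  simp [edgeCross, cross]

lemma edgeCross_succ (v : ZMod m → ℝ × ℝ) (j : ZMod m) : edgeCross v j (v (j + 1)) = 0 :=
  cross_self_eq_zero _

lemma edgeCross_pred_self (v : ZMod m → ℝ × ℝ) (j : ZMod m) :
    edgeCross v (j - 1) (v j) = 0 := by
  simpa only [sub_add_cancel] using edgeCross_succ v (j - 1)

lemma edgeCross_wedge_vertex (v : ZMod m → ℝ × ℝ) (k : ZMod m) (s t : ℝ) :
    edgeCross v k (v k + s • (v (k - 1) - v k) + t • (v (k + 1) - v k)) =
        -s * cross (v (k - 1) - v k) (v (k + 1) - v k) ∧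
      edgeCross v (k - 1) (v k + s • (v (k - 1) - v k) + t • (v (k + 1) - v k)) =
        -t * cross (v (k - 1) - v k) (v (k + 1) - v k) := by
  simp only [edgeCross, sub_add_cancel, cross, Prod.fst_add, Prod.snd_add, Prod.fst_sub,
    Prod.snd_sub, Prod.smul_fst, Prod.smul_snd, smul_eq_mul]
  constructor <;> ring

lemma mem_wedge_add_iff (v : ZMod m → ℝ × ℝ) (k : ZMod m) (p q y : ℝ × ℝ) :
    y ∈ Wedge v k (p + q) ↔ y - p ∈ Wedge v k q := by
  refine exists₂_congr fun s t => and_congr_right' <| and_congr_right' ?_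
  rw [sub_eq_iff_eq_add', add_assoc, add_assoc, add_assoc]

def vertexRegion (v : ZMod m → ℝ × ℝ) (k : ZMod m) : Set (ℝ × ℝ) :=
  {z | ∀ j, j ≠ k - 1 → j ≠ k → edgeCross v j z < 0}

lemma isOpen_vertexRegion [NeZero m] (v : ZMod m → ℝ × ℝ) (k : ZMod m) :
    IsOpen (vertexRegion v k) := by
  simp only [vertexRegion, Set.ofPred_forall]
  exact isOpen_iInter_of_finite fun j => isOpen_iInter_of_finite fun _ =>
    isOpen_iInter_of_finite fun _ => isOpen_lt (continuous_edgeCross v j) continuous_const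

namespace ClockwiseConvex

lemma edgeCross_vertex_nonpos (hcw : ClockwiseConvex v) (j k : ZMod m) :
    edgeCross v j (v k) ≤ 0 := by
  by_cases hkj : k = j
  · rw [hkj, edgeCross_self]
  by_cases hkj' : k = j + 1
  · rw [hkj', edgeCross_succ]
  exact (hcw j k hkj hkj').le

lemma cross_pos (hm : 3 ≤ m) (hcw : ClockwiseConvex v) (k : ZMod m) :
    0 < cross (v (k - 1) - v k) (v (k + 1) - v k) := by
  have h := hcw k (k - 1) (ZMod.sub_one_ne_self (by omega) k) (ZMod.sub_one_ne_add_one hm k)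
  simp only [cross] at h ⊢
  linarith

lemma mem_wedge_vertex_iff (hm : 3 ≤ m) (hcw : ClockwiseConvex v) (k : ZMod m) (y : ℝ × ℝ) :
    y ∈ Wedge v k (v k) ↔ edgeCross v (k - 1) y ≤ 0 ∧ edgeCross v k y ≤ 0 := by
  have hc := hcw.cross_pos hm k
  constructor
  · rintro ⟨s, t, hs, ht, rfl⟩
    obtain ⟨hk, hk'⟩ := edgeCross_wedge_vertex v k s t
    rw [hk, hk']
    constructor <;> nlinarith
  · rintro ⟨hk', hk⟩
    obtain ⟨s, t, hy⟩ : ∃ s t : ℝ, y = v k + s • (v (k - 1) - v k) + t • (v (k + 1) - v k) :=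
      ⟨_, _, by
        rw [add_assoc, ← sub_eq_iff_eq_add']; exact eq_smul_add_smul_of_cross_ne_zero hc.ne' _⟩
    obtain ⟨hs, ht⟩ := edgeCross_wedge_vertex v k s t
    rw [← hy] at hs ht
    exact ⟨s, t, by nlinarith, by nlinarith, hy⟩

lemma convexHull_subset (hcw : ClockwiseConvex v) :
    convexHull ℝ (Set.range v) ⊆ {y | ∀ j, edgeCross v j y ≤ 0} := by
  refine convexHull_min (Set.range_subset_iff.mpr fun k j => hcw.edgeCross_vertex_nonpos j k) ?_
  intro x hx y hy a b ha hb hab j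
  rw [edgeCross_convexComb v j hab]
  nlinarith [hx j, hy j]

/-- A functional separating `y` from the polygon is maximal at some vertex `v k`; but `y` lies in
the wedge at `v k`, on which the functional is at most its value at `v k`. -/
lemma convexHull_eq (hm : 3 ≤ m) (hcw : ClockwiseConvex v) :
    convexHull ℝ (Set.range v) = {y | ∀ j, edgeCross v j y ≤ 0} := by
  have : NeZero m := ⟨by omega⟩
  refine hcw.convexHull_subset.antisymm fun y hy => ?_
  by_contra hy'
  obtain ⟨φ, u, hφ, hφy⟩ := geometric_hahn_banach_closed_point
    (convex_convexHull ℝ _) ((Set.finite_range v).isClosed_convexHull ℝ) hy'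
  obtain ⟨k, hk⟩ := Finite.exists_max (fun i => φ (v i))
  obtain ⟨s, t, hs, ht, rfl⟩ := (hcw.mem_wedge_vertex_iff hm k y).mpr ⟨hy (k - 1), hy k⟩
  have hφk := hφ (v k) (subset_convexHull ℝ _ ⟨k, rfl⟩)
  simp only [map_add, map_smul, map_sub, smul_eq_mul] at hφy
  nlinarith [hk (k - 1), hk (k + 1)]

lemma mem_convexHull_iff_of_mem_vertexRegion (hm : 3 ≤ m) (hcw : ClockwiseConvex v) {k : ZMod m}
    {z : ℝ × ℝ} (hz : z ∈ vertexRegion v k) :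
    z ∈ convexHull ℝ (Set.range v) ↔ z ∈ Wedge v k (v k) := by
  rw [hcw.convexHull_eq hm, hcw.mem_wedge_vertex_iff hm]
  refine ⟨fun h => ⟨h _, h _⟩, fun ⟨hk', hk⟩ j => ?_⟩
  by_cases hj : j = k - 1
  · rwa [hj]
  by_cases hj' : j = k
  · rwa [hj']
  exact (hz j hj hj').le

lemma mem_segment_of_edgeCross_eq_zero (hm : 3 ≤ m) (hcw : ClockwiseConvex v) {j : ZMod m}
    {y : ℝ × ℝ} (hy : ∀ l, edgeCross v l y ≤ 0) (hj : edgeCross v j y = 0) :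
    y ∈ segment ℝ (v j) (v (j + 1)) := by
  have hj' : j + 1 - 1 = j := add_sub_cancel_right j 1
  obtain ⟨s, t, hs, ht, hyst⟩ :=
    (hcw.mem_wedge_vertex_iff hm (j + 1) y).mpr ⟨by rw [hj']; exact hy j, hy (j + 1)⟩
  obtain ⟨-, ht0⟩ := edgeCross_wedge_vertex v (j + 1) s t
  have hc := hcw.cross_pos hm (j + 1)
  rw [← hyst, hj', hj] at ht0
  rw [hj'] at hyst hc
  obtain rfl : t = 0 := by nlinarith
  subst hyst
  have hy_eq : v (j + 1) + s • (v j - v (j + 1)) + (0 : ℝ) • (v (j + 1 + 1) - v (j + 1)) =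
      s • v j + (1 - s) • v (j + 1) := by module
  have hprev : edgeCross v (j - 1) (v (j + 1)) < 0 :=
    hcw (j - 1) (j + 1) (ZMod.sub_one_ne_add_one hm j).symm
      (by rw [sub_add_cancel]; exact ZMod.add_one_ne_self (by omega) j)
  have hs1 := hy (j - 1)
  rw [hy_eq, edgeCross_convexComb v _ (by ring), edgeCross_pred_self] at hs1
  exact ⟨s, 1 - s, hs, by nlinarith, by ring, hy_eq.symm⟩

lemma exists_mem_vertexRegion (hm : 3 ≤ m) (hcw : ClockwiseConvex v) {y : ℝ × ℝ}
    (hy : ∀ l, edgeCross v l y ≤ 0) : ∃ k, y ∈ vertexRegion v k := by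
  by_cases hneg : ∀ l, edgeCross v l y < 0
  · exact ⟨0, fun l _ _ => hneg l⟩
  push Not at hneg
  obtain ⟨j, hj⟩ := hneg
  obtain ⟨a, b, ha, hb, hab, rfl⟩ :=
    hcw.mem_segment_of_edgeCross_eq_zero hm hy (le_antisymm (hy j) hj)
  rcases hb.eq_or_lt with rfl | hb
  · obtain rfl : a = 1 := by linarith
    refine ⟨j, fun l hl hl' => ?_⟩
    rw [one_smul, zero_smul, add_zero]
    exact hcw l j (Ne.symm hl') fun h => hl (eq_sub_of_add_eq h.symm)
  · refine ⟨j + 1, fun l hl hl' => ?_⟩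
    rw [add_sub_cancel_right] at hl
    rw [edgeCross_convexComb v l hab]
    have hl_succ : edgeCross v l (v (j + 1)) < 0 :=
      hcw l (j + 1) (Ne.symm hl') fun h => hl (add_right_cancel h).symm
    nlinarith [hcw.edgeCross_vertex_nonpos l j]

lemma exists_ball_subset_vertexRegion (hm : 3 ≤ m) (hcw : ClockwiseConvex v) :
    ∃ δ > 0, ∀ y ∈ convexHull ℝ (Set.range v), ∃ k, Metric.ball y δ ⊆ vertexRegion v k := by
  have : NeZero m := ⟨by omega⟩
  refine lebesgue_number_lemma_of_metric ((Set.finite_range v).isCompact_convexHull ℝ)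
    (isOpen_vertexRegion v) fun y hy => Set.mem_iUnion.mpr ?_
  exact hcw.exists_mem_vertexRegion hm (hcw.convexHull_subset hy)

/-- The wedge at `v k` lies in the half-plane `edgeCross v k ≤ 0`, and a suitable translate of that
half-plane misses any compact set. -/
lemma exists_wedge_disjoint (hm : 3 ≤ m) (hcw : ClockwiseConvex v) (k : ZMod m)
    {K : Set (ℝ × ℝ)} (hK : IsCompact K) : ∃ q, Disjoint (Wedge v k q) K := by
  obtain ⟨B, hB⟩ := hK.bddBelow_image (continuous_edgeCross v k).continuousOn
  have hc : edgeCross v k (v (k - 1)) < 0 :=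
    hcw k (k - 1) (ZMod.sub_one_ne_self (by omega) k) (ZMod.sub_one_ne_add_one hm k)
  refine ⟨((B - 1) / edgeCross v k (v (k - 1))) • (v (k - 1) - v k) + v k,
    Set.disjoint_left.mpr fun z hz hzK => ?_⟩
  rw [mem_wedge_add_iff, hcw.mem_wedge_vertex_iff hm] at hz
  obtain ⟨-, hz⟩ := hz
  rw [edgeCross_sub, cross_smul_right] at hz
  have hzB : B ≤ edgeCross v k z := hB (Set.mem_image_of_mem _ hzK)
  have hd : cross (v (k + 1) - v k) (v (k - 1) - v k) = edgeCross v k (v (k - 1)) := rfl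
  rw [hd, div_mul_cancel₀ _ hc.ne] at hz
  linarith

end ClockwiseConvex

/-- For a closed convex polygon `S = conv {v 1, …, v m}` there is
`x > 0` such that every translate of `S` intersects every closed axis-parallel square of
side `x` exactly like the translate of one of the wedges of `S`. -/
theorem translate_meets_small_square_like_wedge
    (m : ℕ) (hm : 3 ≤ m) (v : ZMod m → ℝ × ℝ) (hcw : ClockwiseConvex v) :
    ∃ x : ℝ, 0 < x ∧
      ∀ a p : ℝ × ℝ, ∃ (i : ZMod m) (q : ℝ × ℝ),
        {y : ℝ × ℝ | y - p ∈ convexHull ℝ (Set.range v)} ∩ Set.Icc a (a + (x, x))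
          = Wedge v i q ∩ Set.Icc a (a + (x, x)) := by
  obtain ⟨δ, hδ, hball⟩ := hcw.exists_ball_subset_vertexRegion hm
  refine ⟨δ / 2, half_pos hδ, fun a p => ?_⟩
  rcases ({y : ℝ × ℝ | y - p ∈ convexHull ℝ (Set.range v)} ∩
      Set.Icc a (a + (δ / 2, δ / 2))).eq_empty_or_nonempty with hempty | ⟨y, hyS, hyQ⟩
  · obtain ⟨q, hq⟩ := hcw.exists_wedge_disjoint hm 0 isCompact_Icc
    exact ⟨0, q, by rw [hempty, hq.inter_eq]⟩
  obtain ⟨k, hk⟩ := hball (y - p) hyS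
  refine ⟨k, p + v k, Set.ext fun z => and_congr_left fun hzQ => ?_⟩
  rw [Set.mem_ofPred_eq, mem_wedge_add_iff]
  refine hcw.mem_convexHull_iff_of_mem_vertexRegion hm (hk ?_)
  rw [Metric.mem_ball, dist_sub_right]
  calc dist z y ≤ dist a (a + (δ / 2, δ / 2)) := Prod.dist_le_of_mem_Icc hzQ hyQ
    _ < δ := by simp [abs_of_pos hδ, hδ]
end
end
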